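/- arXiv:1212.1983 — 10 statements merged into one kernel-verified Lean document; each statement's English description precedes it below -/
import Mathlib

section
/- Let p > 3 be a prime with p ≡ 2 (mod 3), and let k ∈ ZMod p with k ≠ 0. Then the number of F_p-rational points, including the point at infinity, of the elliptic curve y² = x³ + k over F_p equals p + 1. -/
/-!
When `q ≡ 2 (mod 3)`, cubing is a bijection of `𝔽_q` (an explicit inverse is `x ↦ x ^ ((2q - 1) / 3)`),
so for each `y` there is exactly one `x` with `x³ = y² - k`. Since `Δ = -432 k² ≠ 0` in
characteristic `> 3`, every such solution is a nonsingular point, and `(x, y) ↦ y` identifies the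
affine points with `𝔽_q`; the point at infinity adds one.
-/

/-- The number of `F_p`-rational points, including the point at infinity, of the elliptic curve
`y² = x³ + k` over `F_p`. -/
noncomputable def Npts (p : ℕ) (k : ZMod p) : ℕ :=
  Nat.card (WeierstrassCurve.Affine.Point
    (WeierstrassCurve.toAffine ⟨0, 0, 0, 0, k⟩))

open Function WeierstrassCurve

theorem FiniteField.pow_three_bijective {K : Type*} [Field K] [Fintype K]
    (hK : Fintype.card K % 3 = 2) : Bijective fun x : K => x ^ 3 := by
  suffices hsurj : Surjective fun x : K => x ^ 3 from
    ⟨Finite.injective_iff_surjective.mpr hsurj, hsurj⟩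
  refine fun x => ⟨x ^ ((2 * Fintype.card K - 1) / 3), ?_⟩
  have hdvd : 3 ∣ 2 * Fintype.card K - 1 := by omega
  have hexp : 2 * Fintype.card K - 1 = (Fintype.card K - 1) + Fintype.card K := by
    have := Fintype.one_lt_card (α := K); omega
  dsimp only
  rw [← pow_mul, Nat.div_mul_cancel hdvd, hexp, pow_add, FiniteField.pow_card]
  rcases eq_or_ne x 0 with rfl | hx
  · exact mul_zero _
  · rw [FiniteField.pow_card_sub_one_eq_one x hx, one_mul]

theorem ZMod.six_ne_zero {p : ℕ} (hp : p.Prime) (hp3 : 3 < p) : (6 : ZMod p) ≠ 0 := by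
  have hndvd : ¬ p ∣ 2 * 3 := fun h => by
    rcases hp.dvd_mul.mp h with h | h <;> have := Nat.le_of_dvd (by norm_num) h <;> omega
  exact_mod_cast (ZMod.natCast_eq_zero_iff 6 p).not.mpr hndvd

namespace WeierstrassCurve.Affine.Point

variable {R : Type*} [CommRing R] {W : Affine R}

def y? : W.Point → Option R
  | .zero => none
  | .some _ y _ => Option.some y

end WeierstrassCurve.Affine.Point

section MordellCurve

variable {F : Type*} [Field F]

def mordellCurve (k : F) : WeierstrassCurve F := ⟨0, 0, 0, 0, k⟩

variable {k : F}

lemma mordellCurve_equation_iff {x y : F} :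
    (mordellCurve k).toAffine.Equation x y ↔ y ^ 2 = x ^ 3 + k := by
  simp [Affine.equation_iff, mordellCurve]

lemma mordellCurve_Δ : (mordellCurve k).Δ = -432 * k ^ 2 := by
  simp only [Δ, b₂, b₄, b₆, b₈, mordellCurve]
  ring

lemma mordellCurve_Δ_ne_zero (h6 : (6 : F) ≠ 0) (hk : k ≠ 0) : (mordellCurve k).Δ ≠ 0 := by
  have h2 : (2 : F) ≠ 0 := fun h => h6 (by linear_combination 3 * h)
  rw [mordellCurve_Δ, show (-432 : F) = -(2 * 6 ^ 3) by norm_num]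
  exact mul_ne_zero (neg_ne_zero.mpr (mul_ne_zero h2 (pow_ne_zero 3 h6))) (pow_ne_zero 2 hk)

lemma mordellCurve_y?_injective (hcube : Injective fun x : F => x ^ 3) :
    Injective (Affine.Point.y? (W := (mordellCurve k).toAffine)) := by
  rintro (_ | ⟨x₁, y₁, h₁⟩) (_ | ⟨x₂, y₂, h₂⟩) h <;>
    simp only [Affine.Point.y?, reduceCtorEq, Option.some.injEq] at h
  · rfl
  · subst h
    have hx : x₁ = x₂ := hcube <| by
      have e₁ := mordellCurve_equation_iff.mp h₁.1
      have e₂ := mordellCurve_equation_iff.mp h₂.1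
      dsimp only
      linear_combination e₂ - e₁
    subst hx
    rfl

lemma mordellCurve_y?_surjective (h6 : (6 : F) ≠ 0) (hk : k ≠ 0)
    (hcube : Surjective fun x : F => x ^ 3) :
    Surjective (Affine.Point.y? (W := (mordellCurve k).toAffine)) := by
  rintro (_ | y)
  · exact ⟨0, rfl⟩
  · obtain ⟨x, hx⟩ := hcube (y ^ 2 - k)
    have hxy : (mordellCurve k).toAffine.Equation x y :=
      mordellCurve_equation_iff.mpr (by dsimp only at hx; rw [hx]; ring)
    have hns := (Affine.equation_iff_nonsingular_of_Δ_ne_zero (mordellCurve_Δ_ne_zero h6 hk)).mp hxy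
    exact ⟨.some x y hns, rfl⟩

lemma mordellCurve_card_point [Finite F] (h6 : (6 : F) ≠ 0) (hk : k ≠ 0)
    (hcube : Bijective fun x : F => x ^ 3) :
    Nat.card (mordellCurve k).toAffine.Point = Nat.card F + 1 := by
  rw [Nat.card_eq_of_bijective _ ⟨mordellCurve_y?_injective hcube.1,
    mordellCurve_y?_surjective h6 hk hcube.2⟩, Finite.card_option]

end MordellCurve

/-- Theorem 2.4(a): if `p > 3` is prime with `p ≡ 2 (mod 3)` and `k ≠ 0`, then the curve
`y² = x³ + k` has exactly `p + 1` points over `F_p`. -/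
theorem stmt_1 (p : ℕ) (hp : p.Prime) (hp3 : 3 < p) (hpmod : p % 3 = 2)
    (k : ZMod p) (hk : k ≠ 0) : Npts p k = p + 1 := by
  have : Fact p.Prime := ⟨hp⟩
  have hcube := FiniteField.pow_three_bijective (K := ZMod p) (by rwa [ZMod.card])
  rw [Npts, ← mordellCurve, mordellCurve_card_point (ZMod.six_ne_zero hp hp3) hk hcube,
    Nat.card_zmod]
end

section
/- Let p > 3 be a prime with p ≡ 1 (mod 3), and let k ∈ ZMod p with k ≠ 0. Then there exist integers a, b with b > 0, a ≡ 2 (mod 3), and p = a² + 3b², such that the number N_p(k) of F_p-rational points (including the point at infinity) of the curve y² = x³ + k over F_p satisfies: (i) if k is a sixth power in ZMod p then N_p(k) = p + 1 + 2a; (ii) if k is a cube but not a square in ZMod p then N_p(k) = p + 1 − 2a; (iii) if k is a square but not a cube in ZMod p then N_p(k) = p + 1 − a + 3b or N_p(k) = p + 1 − a − 3b; (iv) if k is neither a square nor a cube in ZMod p then N_p(k) = p + 1 + a + 3b or N_p(k) = p + 1 + a − 3b. -/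
/-!
Let `ψ` be a cubic and `χ` the quadratic character of `𝔽_q`, both valued in `ℂ`, and
`J = J(ψ, χ)` their Jacobi sum. Counting square roots by `χ` and cube roots by
`#{x | x³ = t} = 1 + ψ t + ψ² t` gives `N(k) = q + 1 + χ(k) · 2 Re (ψ(k) J)`.
Writing `J + 1 = ∑ ψ(x) (χ(1 - x) - 1)` shows `J ≡ -1 (mod 2ℤ[ω])`, so `J = a + b√-3` with
`a, b ∈ ℤ`, and `|J|² = q` gives `q = a² + 3b²`. The six values of `N(k)` are the six choices
of `ψ(k) ∈ {1, ω, ω²}` and `χ(k) = ±1`. Finally `(0, 1)` has order 3 on `y² = x³ + 1`, so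
`3 ∣ N(1) = q + 1 + 2a`, which fixes `a ≡ 2 (mod 3)`.
-/

open Finset ComplexConjugate

theorem one_add_self_add_sq_eq_zero {R : Type*} [CommRing R] [IsDomain R] {z : R}
    (h3 : z ^ 3 = 1) (h1 : z ≠ 1) : 1 + z + z ^ 2 = 0 := by
  have : (z - 1) * (1 + z + z ^ 2) = 0 := by linear_combination h3
  exact (mul_eq_zero.mp this).resolve_left (sub_ne_zero.mpr h1)

theorem IsPrimitiveRoot.conj_eq_sq {ω : ℂ} (hω : IsPrimitiveRoot ω 3) : conj ω = ω ^ 2 := by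
  rw [← Complex.inv_eq_conj (hω.norm'_eq_one three_ne_zero)]
  exact inv_eq_of_mul_eq_one_right (by rw [← pow_succ']; exact hω.pow_eq_one)

theorem IsPrimitiveRoot.card_filter_pow_eq_pow {R : Type*} [CommRing R] [IsDomain R] [Fintype R]
    [DecidableEq R] {n : ℕ} (hn : 0 < n) {ζ : R} (hζ : IsPrimitiveRoot ζ n) {u : R}
    (hu : u ≠ 0) : #{x | x ^ n = u ^ n} = n := by
  have hroots : ({x | x ^ n = u ^ n} : Finset R) = (Polynomial.nthRoots n (u ^ n)).toFinset := by
    ext x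
    simp [Polynomial.mem_nthRoots hn]
  rw [hroots, Multiset.toFinset_card_of_nodup (hζ.nthRoots_nodup (pow_ne_zero n hu)),
    hζ.nthRoots_eq rfl, Multiset.card_map, Multiset.card_range]

namespace FiniteField

variable {F : Type*} [Field F] [Fintype F]

theorem natCast_ne_zero_of_dvd_card_sub_one {n : ℕ} (hn : n ∣ Fintype.card F - 1) :
    (n : F) ≠ 0 := by
  obtain ⟨m, hm⟩ := hn
  have hcard : ((Fintype.card F - 1 : ℕ) : F) = -1 := by
    rw [Nat.cast_sub Fintype.card_pos, cast_card_eq_zero, Nat.cast_one, zero_sub]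
  intro h
  rw [hm, Nat.cast_mul, h, zero_mul] at hcard
  exact zero_ne_one (neg_eq_zero.mp hcard.symm).symm

theorem exists_isPrimitiveRoot_of_dvd_card_sub_one {n : ℕ} (hn : n.Prime)
    (hdvd : n ∣ Fintype.card F - 1) : ∃ ζ : F, IsPrimitiveRoot ζ n := by
  have : Fact n.Prime := ⟨hn⟩
  classical
  obtain ⟨ζ, hζ⟩ := exists_prime_orderOf_dvd_card (G := Fˣ) n (by rwa [Fintype.card_units])
  exact ⟨ζ, IsPrimitiveRoot.coe_units_iff.mpr (hζ ▸ IsPrimitiveRoot.orderOf ζ)⟩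

end FiniteField

namespace MulChar

variable {F R : Type*} [Field F] [CommRing R]

theorem apply_neg_of_odd {n : ℕ} (hn : Odd n) {ψ : MulChar F R} (hψ : ψ ^ n = 1) (a : F) :
    ψ (-a) = ψ a := by
  have hneg : ψ (-1) = 1 := by
    rw [← hn.neg_one_pow, map_pow, ← pow_apply' ψ hn.pos.ne', hψ, one_apply isUnit_one.neg]
  rw [neg_eq_neg_one_mul, map_mul, hneg, one_mul]

variable [Fintype F]

theorem apply_eq_one_iff_exists_pow_eq {n : ℕ} (hn : n.Prime) (hdvd : n ∣ Fintype.card F - 1)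
    {ψ : MulChar F R} (hψn : ψ ^ n = 1) (hψ : ψ ≠ 1) {t : F} (ht : t ≠ 0) :
    ψ t = 1 ↔ ∃ u, u ^ n = t := by
  refine ⟨fun h ↦ ?_, ?_⟩
  · -- `ker ψ` contains the `n`-th powers, which have prime index `n`, so the two coincide
    set H := (powMonoidHom n : Fˣ →* Fˣ).range
    set K := ψ.toUnitHom.ker
    have hHK : H ≤ K := by
      rintro _ ⟨u, rfl⟩
      rw [MonoidHom.mem_ker, powMonoidHom_apply, map_pow, ← Units.val_inj]
      push_cast
      rw [coe_toUnitHom, ← pow_apply_coe, hψn, one_apply_coe]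
    have hH : H.index = n := by
      rw [IsCyclic.index_powMonoidHom_range, Nat.card_units, Nat.card_eq_fintype_card,
        Nat.gcd_eq_right hdvd]
    have hK : K ≠ ⊤ := by
      intro hK
      refine hψ (eq_one_iff.mpr fun a ↦ ?_)
      have ha : a ∈ K := hK ▸ Subgroup.mem_top a
      rw [← coe_toUnitHom, MonoidHom.mem_ker.mp ha, Units.val_one]
    have htH : Units.mk0 t ht ∈ H := by
      by_contra hnot
      have : H.FiniteIndex := ⟨hH ▸ hn.ne_zero⟩
      have hlt := Subgroup.index_strictAnti (lt_of_le_of_ne hHK fun e ↦ hnot (e ▸ ?_))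
      · rcases (Nat.dvd_prime hn).mp (hH ▸ Subgroup.index_dvd_of_le hHK) with h1 | h1
        · exact hK (Subgroup.index_eq_one.mp h1)
        · omega
      · rw [MonoidHom.mem_ker, ← Units.val_inj, coe_toUnitHom]
        simpa using h
    obtain ⟨u, hu⟩ := htH
    exact ⟨u, by simpa using congrArg Units.val hu⟩
  · rintro ⟨u, rfl⟩
    have hu : u ≠ 0 := by rintro rfl; exact ht (zero_pow hn.ne_zero)
    rw [map_pow, ← pow_apply' ψ hn.ne_zero, hψn, one_apply hu.isUnit]

theorem card_filter_pow_three_eq [IsDomain R] [DecidableEq F] (h3 : 3 ∣ Fintype.card F - 1)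
    {ψ : MulChar F R} (hψ3 : ψ ^ 3 = 1) (hψ : ψ ≠ 1) (t : F) :
    (#{x | x ^ 3 = t} : R) = 1 + ψ t + (ψ ^ 2) t := by
  rw [pow_apply' ψ two_ne_zero]
  rcases eq_or_ne t 0 with rfl | ht
  · simp [Finset.filter_eq']
  have hcube := apply_eq_one_iff_exists_pow_eq Nat.prime_three h3 hψ3 hψ ht
  by_cases ht3 : ∃ u, u ^ 3 = t
  · obtain ⟨ζ, hζ⟩ := FiniteField.exists_isPrimitiveRoot_of_dvd_card_sub_one Nat.prime_three h3
    rw [hcube.mpr ht3]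
    obtain ⟨u, rfl⟩ := ht3
    rw [hζ.card_filter_pow_eq_pow three_pos (pow_ne_zero_iff three_ne_zero |>.mp ht)]
    norm_num
  · have hempty : ({x | x ^ 3 = t} : Finset F) = ∅ := by
      ext x
      simpa using fun h ↦ ht3 ⟨x, h⟩
    have hψt : ψ t ^ 3 = 1 := by rw [← pow_apply' ψ three_ne_zero, hψ3, one_apply ht.isUnit]
    rw [hempty, card_empty, Nat.cast_zero,
      one_add_self_add_sq_eq_zero hψt (mt hcube.mp ht3)]

end MulChar

section JacobiSum

variable {F R : Type*} [Field F] [Fintype F] [CommRing R]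

theorem sum_mulChar_mul_apply_add (φ χ : MulChar F R) {k : F} (hk : k ≠ 0) :
    ∑ t, φ t * χ (t + k) = φ (-k) * χ k * jacobiSum φ χ := by
  rw [jacobiSum, mul_sum]
  refine (Fintype.sum_bijective _ (mulLeft_bijective₀ (-k) (neg_ne_zero.mpr hk)) _ _
    fun s ↦ ?_).symm
  rw [show -k * s + k = k * (1 - s) by ring, map_mul, map_mul]
  ring

variable [IsDomain R]

theorem mul_apply_sub_one_mem_closure {ψ χ : MulChar F R} (hψ3 : ψ ^ 3 = 1) (hχ : χ ^ 2 = 1)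
    {μ : R} (hμ : IsPrimitiveRoot μ 3) {x y : F} (hx : x ≠ 0) (hy : y ≠ 0) :
    ψ x * (χ y - 1) ∈ AddSubgroup.closure ({2, 2 * μ} : Set R) := by
  have h2 : (2 : R) ∈ AddSubgroup.closure ({2, 2 * μ} : Set R) :=
    AddSubgroup.subset_closure (by simp)
  have h2μ : 2 * μ ∈ AddSubgroup.closure ({2, 2 * μ} : Set R) :=
    AddSubgroup.subset_closure (by simp)
  have hχy : χ y ^ 2 = 1 := by
    rw [← MulChar.pow_apply' χ two_ne_zero, hχ, MulChar.one_apply hy.isUnit]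
  obtain ⟨j, hj, hψx⟩ := MulChar.exists_apply_eq_pow hψ3 hμ hx
  rcases sq_eq_one_iff.mp hχy with h | h
  · simp [h]
  interval_cases j
  · rw [hψx, h, show μ ^ 0 * (-1 - 1) = -2 by ring]
    exact neg_mem h2
  · rw [hψx, h, show μ ^ 1 * (-1 - 1) = -(2 * μ) by ring]
    exact neg_mem h2μ
  · have : μ ^ 2 * (-1 - 1) = 2 + 2 * μ := by
      linear_combination -2 * one_add_self_add_sq_eq_zero hμ.pow_eq_one (hμ.ne_one (by norm_num))
    rw [hψx, h, this]
    exact add_mem h2 h2μ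

theorem exists_jacobiSum_eq_neg_one_add_two_mul [DecidableEq F] {ψ χ : MulChar F R}
    (hψ3 : ψ ^ 3 = 1) (hψ : ψ ≠ 1) (hχ : χ ^ 2 = 1) {μ : R} (hμ : IsPrimitiveRoot μ 3) :
    ∃ c d : ℤ, jacobiSum ψ χ = -1 + 2 * (c + d * μ) := by
  have hsdiff : ∑ x ∈ univ \ {0, 1}, ψ x = -1 := by
    have := sum_sdiff (f := (ψ ·)) (subset_univ {(0 : F), 1})
    rw [MulChar.sum_eq_zero_of_ne_one hψ, sum_pair zero_ne_one, ψ.map_zero, ψ.map_one] at this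
    linear_combination this
  have hJ : jacobiSum ψ χ + 1 = ∑ x ∈ univ \ {0, 1}, ψ x * (χ (1 - x) - 1) := by
    simp only [mul_sub, mul_one, sum_sub_distrib, hsdiff, jacobiSum_eq_sum_sdiff]
    ring
  have hterm : ∀ x ∈ univ \ {0, 1}, ψ x * (χ (1 - x) - 1) ∈
      AddSubgroup.closure ({2, 2 * μ} : Set R) := by
    intro x hx
    simp only [mem_sdiff, mem_univ, mem_insert, mem_singleton, true_and, not_or] at hx
    exact mul_apply_sub_one_mem_closure hψ3 hχ hμ hx.1 (sub_ne_zero.mpr (Ne.symm hx.2))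
  obtain ⟨c, d, hcd⟩ := AddSubgroup.mem_closure_pair.mp (hJ ▸ sum_mem hterm)
  refine ⟨c, d, ?_⟩
  rw [← sub_eq_iff_eq_add', sub_neg_eq_add, ← hcd]
  simp only [zsmul_eq_mul]
  ring

theorem sum_apply_pow_three_add [DecidableEq F] (h3 : 3 ∣ Fintype.card F - 1)
    {ψ χ : MulChar F R} (hψ3 : ψ ^ 3 = 1) (hψ : ψ ≠ 1) (hχ : χ ≠ 1) {k : F} (hk : k ≠ 0) :
    ∑ x, χ (x ^ 3 + k) =
      ψ k * χ k * jacobiSum ψ χ + (ψ ^ 2) k * χ k * jacobiSum (ψ ^ 2) χ := by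
  have hψ23 : (ψ ^ 2) ^ 3 = 1 := by rw [← pow_mul, mul_comm, pow_mul, hψ3, one_pow]
  have hshift : ∑ t, χ (t + k) = 0 :=
    (Fintype.sum_equiv (Equiv.addRight k) _ _ fun _ ↦ rfl).trans
      (MulChar.sum_eq_zero_of_ne_one hχ)
  calc ∑ x, χ (x ^ 3 + k) = ∑ t, ∑ x with x ^ 3 = t, χ (t + k) := by
        rw [← sum_fiberwise univ (· ^ 3)]
        exact sum_congr rfl fun t _ ↦ sum_congr rfl fun x hx ↦ by rw [(mem_filter.mp hx).2]
    _ = ∑ t, (χ (t + k) + ψ t * χ (t + k) + (ψ ^ 2) t * χ (t + k)) := by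
        refine sum_congr rfl fun t _ ↦ ?_
        rw [sum_const, nsmul_eq_mul, MulChar.card_filter_pow_three_eq h3 hψ3 hψ]
        ring
    _ = _ := by
        rw [sum_add_distrib, sum_add_distrib, hshift, sum_mulChar_mul_apply_add _ _ hk,
          sum_mulChar_mul_apply_add _ _ hk, MulChar.apply_neg_of_odd (by decide) hψ3,
          MulChar.apply_neg_of_odd (by decide) hψ23, zero_add]

end JacobiSum

namespace WeierstrassCurve

theorem natCard_point_eq {F : Type*} [Field F] [Fintype F] [DecidableEq F]
    (hF : ringChar F ≠ 2) (W : WeierstrassCurve F) [W.IsElliptic] (h₁ : W.a₁ = 0)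
    (h₃ : W.a₃ = 0) :
    (Nat.card W.toAffine.Point : ℤ) =
      Fintype.card F + 1 + ∑ x, quadraticChar F (x ^ 3 + W.a₂ * x ^ 2 + W.a₄ * x + W.a₆) := by
  classical
  rw [Nat.card_congr W.toAffine.pointEquiv, WithZero, Finite.card_option,
    Nat.card_eq_fintype_card, Fintype.card_subtype, card_filter, Fintype.sum_prod_type]
  simp only [Affine.equation_iff, h₁, h₃, zero_mul, add_zero, ← card_filter]
  push_cast
  simp only [← Set.toFinset_ofPred, quadraticChar_card_sqrts hF, sum_add_distrib, sum_const,
    card_univ, nsmul_eq_mul, mul_one]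
  ring

open WeierstrassCurve.Affine in
theorem three_dvd_natCard_point {F : Type*} [Field F] (h2 : (2 : F) ≠ 0) {c : F} (hc : c ≠ 0) :
    3 ∣ Nat.card (⟨0, 0, 0, 0, c ^ 2⟩ : WeierstrassCurve F).toAffine.Point := by
  classical
  set W := (⟨0, 0, 0, 0, c ^ 2⟩ : WeierstrassCurve F).toAffine
  have hy : c ≠ W.negY 0 c := by
    simp only [W, negY]
    intro h
    exact mul_ne_zero h2 hc (by linear_combination h)
  have hns : W.Nonsingular 0 c := by
    rw [nonsingular_iff]
    exact ⟨by simp [W, equation_iff], Or.inr hy⟩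
  -- the tangent at `(0, c)` is horizontal, so `2 • P = -P`
  have hslope : W.slope 0 0 c c = 0 := by
    simp [slope_of_Y_ne rfl hy, W]
  have hP : Point.some _ _ hns + Point.some _ _ hns + Point.some _ _ hns = 0 := by
    rw [Point.add_self_of_Y_ne hy]
    exact Point.add_of_Y_eq (by simp [hslope, W, addX]) (by simp [hslope, W, addY, negAddY, addX])
  have hord : addOrderOf (Point.some _ _ hns) = 3 := by
    refine (Nat.prime_three.eq_one_or_self_of_dvd _
      (addOrderOf_dvd_of_nsmul_eq_zero ?_)).resolve_left
      fun h ↦ Point.some_ne_zero hns (AddMonoid.addOrderOf_eq_one_iff.mp h)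
    rwa [succ_nsmul, two_nsmul]
  exact hord ▸ addOrderOf_dvd_natCard _

end WeierstrassCurve

section Complex

variable {F : Type*} [Field F] [Fintype F]

theorem conj_jacobiSum (φ χ : MulChar F ℂ) : conj (jacobiSum φ χ) = jacobiSum φ⁻¹ χ⁻¹ := by
  simp only [jacobiSum, map_sum, map_mul, Complex.star_def.symm, MulChar.star_apply']

variable [DecidableEq F]

variable (F) in
def complexQuadraticChar : MulChar F ℂ := (quadraticChar F).ringHomComp (Int.castRingHom ℂ)

theorem complexQuadraticChar_apply (a : F) : complexQuadraticChar F a = quadraticChar F a := rfl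

theorem isQuadratic_complexQuadraticChar : (complexQuadraticChar F).IsQuadratic :=
  (quadraticChar_isQuadratic F).comp _

theorem complexQuadraticChar_ne_one (hF : ringChar F ≠ 2) : complexQuadraticChar F ≠ 1 :=
  (MulChar.ringHomComp_ne_one_iff Int.cast_injective).mpr (quadraticChar_ne_one hF)

theorem natCard_point_eq_add_trace (hF : ringChar F ≠ 2) (h3 : 3 ∣ Fintype.card F - 1)
    {ψ : MulChar F ℂ} (hψ3 : ψ ^ 3 = 1) (hψ : ψ ≠ 1) {k : F} (hk : k ≠ 0) :
    (Nat.card (⟨0, 0, 0, 0, k⟩ : WeierstrassCurve F).toAffine.Point : ℂ) =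
      Fintype.card F + 1 + quadraticChar F k *
        (ψ k * jacobiSum ψ (complexQuadraticChar F) +
          conj (ψ k * jacobiSum ψ (complexQuadraticChar F))) := by
  have h2 : (2 : F) ≠ 0 := Ring.two_ne_zero hF
  have h3' : (3 : F) ≠ 0 := by
    exact_mod_cast FiniteField.natCast_ne_zero_of_dvd_card_sub_one h3
  have hΔ : (⟨0, 0, 0, 0, k⟩ : WeierstrassCurve F).Δ = -(2 ^ 4 * 3 ^ 3 * k ^ 2) := by
    simp only [WeierstrassCurve.Δ, WeierstrassCurve.b₂, WeierstrassCurve.b₄,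
      WeierstrassCurve.b₆, WeierstrassCurve.b₈]
    ring
  have : (⟨0, 0, 0, 0, k⟩ : WeierstrassCurve F).IsElliptic := ⟨Ne.isUnit <| hΔ ▸ neg_ne_zero.mpr
    (mul_ne_zero (mul_ne_zero (pow_ne_zero _ h2) (pow_ne_zero _ h3')) (pow_ne_zero _ hk))⟩
  have hψinv : ψ⁻¹ = ψ ^ 2 := inv_eq_of_mul_eq_one_right (by rw [← pow_succ', hψ3])
  have hcount := congrArg (Int.cast : ℤ → ℂ) (WeierstrassCurve.natCard_point_eq hF
    (⟨0, 0, 0, 0, k⟩ : WeierstrassCurve F) rfl rfl)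
  push_cast at hcount
  simp only [zero_mul, add_zero, ← complexQuadraticChar_apply] at hcount
  rw [hcount, sum_apply_pow_three_add h3 hψ3 hψ (complexQuadraticChar_ne_one hF) hk, map_mul,
    conj_jacobiSum, ← Complex.star_def, MulChar.star_apply', hψinv,
    isQuadratic_complexQuadraticChar.inv, complexQuadraticChar_apply]
  ring

theorem card_eq_sq_add_three_mul_sq_of_jacobiSum_eq {ψ : MulChar F ℂ} (hψ3 : ψ ^ 3 = 1)
    (hψ : ψ ≠ 1) (hF : ringChar F ≠ 2) {ω : ℂ} (hω : IsPrimitiveRoot ω 3) {a b : ℤ}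
    (hJ : jacobiSum ψ (complexQuadraticChar F) = a + b * (1 + 2 * ω)) :
    (Fintype.card F : ℤ) = a ^ 2 + 3 * b ^ 2 := by
  have hχ := isQuadratic_complexQuadraticChar (F := F)
  have hψχ : ψ * complexQuadraticChar F ≠ 1 := by
    intro h
    have hψ2 : ψ ^ 2 = 1 := by
      rw [eq_inv_of_mul_eq_one_left h, hχ.inv, hχ.sq_eq_one]
    exact hψ (by rw [← hψ3, pow_succ, hψ2, one_mul])
  have hq := jacobiSum_mul_jacobiSum_inv
    (by rw [ringChar.eq_zero]; exact (CharP.ringChar_ne_zero_of_finite F).symm) hψ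
    (complexQuadraticChar_ne_one hF) hψχ
  rw [← conj_jacobiSum, hJ] at hq
  simp only [map_add, map_mul, map_intCast, map_one, map_ofNat, hω.conj_eq_sq] at hq
  have hω2 := one_add_self_add_sq_eq_zero hω.pow_eq_one (hω.ne_one (by norm_num))
  have : ((Fintype.card F : ℤ) : ℂ) = ((a ^ 2 + 3 * b ^ 2 : ℤ) : ℂ) := by
    push_cast
    linear_combination -hq + (2 * a * b + 2 * b ^ 2) * hω2 + 4 * b ^ 2 * hω.pow_eq_one
  exact_mod_cast this

theorem natCard_point_eq_of_jacobiSum_eq (hF : ringChar F ≠ 2) (h3 : 3 ∣ Fintype.card F - 1)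
    {ψ : MulChar F ℂ} (hψ3 : ψ ^ 3 = 1) (hψ : ψ ≠ 1) {ω : ℂ} (hω : IsPrimitiveRoot ω 3)
    {a b : ℤ} (hJ : jacobiSum ψ (complexQuadraticChar F) = a + b * (1 + 2 * ω)) {k : F}
    (hk : k ≠ 0) :
    letI N : ℤ := Nat.card (⟨0, 0, 0, 0, k⟩ : WeierstrassCurve F).toAffine.Point
    ((∃ u, u ^ 3 = k) → N = Fintype.card F + 1 + 2 * quadraticChar F k * a) ∧
    (¬(∃ u, u ^ 3 = k) → N = Fintype.card F + 1 - quadraticChar F k * (a + 3 * b) ∨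
      N = Fintype.card F + 1 - quadraticChar F k * (a - 3 * b)) := by
  have hN (t : ℤ) (ht : ψ k * jacobiSum ψ (complexQuadraticChar F) +
      conj (ψ k * jacobiSum ψ (complexQuadraticChar F)) = t) :
      (Nat.card (⟨0, 0, 0, 0, k⟩ : WeierstrassCurve F).toAffine.Point : ℤ) =
        Fintype.card F + 1 + quadraticChar F k * t := by
    have := natCard_point_eq_add_trace hF h3 hψ3 hψ hk
    rw [ht] at this
    exact_mod_cast this
  have hω3 := hω.pow_eq_one
  have hω2 := one_add_self_add_sq_eq_zero hω3 (hω.ne_one (by norm_num))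
  simp only [map_mul, hJ, map_add, map_intCast, map_one, map_ofNat, hω.conj_eq_sq] at hN
  have hcube := MulChar.apply_eq_one_iff_exists_pow_eq Nat.prime_three h3 hψ3 hψ hk
  refine ⟨fun hk3 ↦ ?_, fun hk3 ↦ ?_⟩
  · rw [hN (2 * a) (by rw [hcube.mpr hk3, map_one]; push_cast; linear_combination 2 * b * hω2)]
    ring
  obtain ⟨j, hj, hψk⟩ := MulChar.exists_apply_eq_pow hψ3 hω hk
  interval_cases j
  · exact absurd (hcube.mp (by rw [hψk, pow_zero])) hk3
  · left
    rw [hN (-(a + 3 * b)) (by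
      rw [hψk, pow_one, hω.conj_eq_sq]
      push_cast
      linear_combination (a + 3 * b) * hω2 + 2 * b * ω * hω3)]
    ring
  · right
    rw [hN (-(a - 3 * b)) (by
      rw [hψk, map_pow, hω.conj_eq_sq]
      push_cast
      linear_combination (a + b) * hω2 + (a * ω + 2 * b + b * ω + 2 * b * (ω ^ 3 + 1)) * hω3)]
    ring

theorem exists_natCard_point_eq (hF : ringChar F ≠ 2) (h3 : 3 ∣ Fintype.card F - 1) :
    ∃ a b : ℤ, a % 3 = 2 ∧ (Fintype.card F : ℤ) = a ^ 2 + 3 * b ^ 2 ∧ ∀ k : F, k ≠ 0 →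
      letI N : ℤ := Nat.card (⟨0, 0, 0, 0, k⟩ : WeierstrassCurve F).toAffine.Point
      ((∃ u, u ^ 3 = k) → N = Fintype.card F + 1 + 2 * quadraticChar F k * a) ∧
      (¬(∃ u, u ^ 3 = k) → N = Fintype.card F + 1 - quadraticChar F k * (a + 3 * b) ∨
        N = Fintype.card F + 1 - quadraticChar F k * (a - 3 * b)) := by
  obtain ⟨ω, hω⟩ : ∃ ω : ℂ, IsPrimitiveRoot ω 3 := ⟨_, Complex.isPrimitiveRoot_exp 3 three_ne_zero⟩
  obtain ⟨ψ, hψord⟩ := MulChar.exists_mulChar_orderOf F h3 hω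
  have hψ3 : ψ ^ 3 = 1 := hψord ▸ pow_orderOf_eq_one ψ
  have hψ : ψ ≠ 1 := by rintro rfl; simp at hψord
  obtain ⟨c, d, hcd⟩ := exists_jacobiSum_eq_neg_one_add_two_mul hψ3 hψ
    isQuadratic_complexQuadraticChar.sq_eq_one hω
  -- `J = a + b√-3` with `√-3 = 1 + 2ω`
  have hJ : jacobiSum ψ (complexQuadraticChar F) = ((2 * c - 1 - d : ℤ) : ℂ) + d * (1 + 2 * ω) := by
    rw [hcd]; push_cast; ring
  have hN k (hk : k ≠ 0) := natCard_point_eq_of_jacobiSum_eq hF h3 hψ3 hψ hω hJ hk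
  refine ⟨2 * c - 1 - d, d, ?_, card_eq_sq_add_three_mul_sq_of_jacobiSum_eq hψ3 hψ hF hω hJ, hN⟩
  have hN1 := (hN 1 one_ne_zero).1 ⟨1, one_pow 3⟩
  have h3N1 := WeierstrassCurve.three_dvd_natCard_point (Ring.two_ne_zero hF) (one_ne_zero (α := F))
  rw [one_pow] at h3N1
  rw [map_one] at hN1
  have := Fintype.card_pos (α := F)
  omega

end Complex

theorem stmt_2_general (p : ℕ) (hp : p.Prime) (hpmod : p % 3 = 1)
    (k : ZMod p) (hk : k ≠ 0) :
    ∃ a b : ℤ, 0 < b ∧ a % 3 = 2 ∧ (p : ℤ) = a ^ 2 + 3 * b ^ 2 ∧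
      (((∃ u : ZMod p, u ^ 6 = k) → (Npts p k : ℤ) = p + 1 + 2 * a) ∧
       ((∃ u : ZMod p, u ^ 3 = k) → ¬(∃ u : ZMod p, u ^ 2 = k) →
          (Npts p k : ℤ) = p + 1 - 2 * a) ∧
       ((∃ u : ZMod p, u ^ 2 = k) → ¬(∃ u : ZMod p, u ^ 3 = k) →
          ((Npts p k : ℤ) = p + 1 - a + 3 * b ∨ (Npts p k : ℤ) = p + 1 - a - 3 * b)) ∧
       (¬(∃ u : ZMod p, u ^ 2 = k) → ¬(∃ u : ZMod p, u ^ 3 = k) →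
          ((Npts p k : ℤ) = p + 1 + a + 3 * b ∨ (Npts p k : ℤ) = p + 1 + a - 3 * b))) := by
  have : Fact p.Prime := ⟨hp⟩
  obtain ⟨a, b, ha, hab, hN⟩ := exists_natCard_point_eq (F := ZMod p)
    (by rw [ZMod.ringChar_zmod_n]; omega) (by rw [ZMod.card]; omega)
  obtain ⟨hcube, hncube⟩ := hN k hk
  simp only [ZMod.card] at hab hcube hncube
  have hb : b ≠ 0 := by
    rintro rfl
    have : p = a.natAbs ^ 2 := by zify; rw [sq_abs]; linarith
    exact Nat.Prime.not_prime_pow le_rfl (this ▸ hp)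
  have hsq (h : ∃ u, u ^ 2 = k) : quadraticChar (ZMod p) k = 1 := by
    obtain ⟨u, rfl⟩ := h
    exact quadraticChar_sq_one' (pow_ne_zero_iff two_ne_zero |>.mp hk)
  have hnsq (h : ¬∃ u, u ^ 2 = k) : quadraticChar (ZMod p) k = -1 :=
    quadraticChar_neg_one_iff_not_isSquare.mpr fun ⟨u, hu⟩ ↦ h ⟨u, by rw [hu, sq]⟩
  refine ⟨a, |b|, abs_pos.mpr hb, ha, by rwa [sq_abs], fun ⟨u, hu⟩ ↦ ?_, fun h3 h2 ↦ ?_,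
    fun h2 h3 ↦ ?_, fun h2 h3 ↦ ?_⟩ <;> rw [Npts]
  · rw [hcube ⟨u ^ 2, by rw [← hu]; ring⟩, hsq ⟨u ^ 3, by rw [← hu]; ring⟩]
    ring
  · rw [hcube h3, hnsq h2]
    ring
  · rcases hncube h3 with h | h <;> rcases abs_choice b with hb | hb <;> rw [hsq h2] at h <;> omega
  · rcases hncube h3 with h | h <;> rcases abs_choice b with hb | hb <;> rw [hnsq h2] at h <;>
      omega

/-- Theorem 2.4(b): if `p > 3` is prime with `p ≡ 1 (mod 3)` and `k ≠ 0`, then writing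
`p = a² + 3b²` with `b > 0` and `a ≡ 2 (mod 3)`, the order of `y² = x³ + k` over `F_p` is one of
six values determined by the quadratic/cubic residue status of `k`. -/
theorem stmt_2 (p : ℕ) (hp : p.Prime) (hp3 : 3 < p) (hpmod : p % 3 = 1)
    (k : ZMod p) (hk : k ≠ 0) :
    ∃ a b : ℤ, 0 < b ∧ a % 3 = 2 ∧ (p : ℤ) = a ^ 2 + 3 * b ^ 2 ∧
      (((∃ u : ZMod p, u ^ 6 = k) → (Npts p k : ℤ) = p + 1 + 2 * a) ∧
       ((∃ u : ZMod p, u ^ 3 = k) → ¬(∃ u : ZMod p, u ^ 2 = k) →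
          (Npts p k : ℤ) = p + 1 - 2 * a) ∧
       ((∃ u : ZMod p, u ^ 2 = k) → ¬(∃ u : ZMod p, u ^ 3 = k) →
          ((Npts p k : ℤ) = p + 1 - a + 3 * b ∨ (Npts p k : ℤ) = p + 1 - a - 3 * b)) ∧
       (¬(∃ u : ZMod p, u ^ 2 = k) → ¬(∃ u : ZMod p, u ^ 3 = k) →
          ((Npts p k : ℤ) = p + 1 + a + 3 * b ∨ (Npts p k : ℤ) = p + 1 + a - 3 * b))) :=
  stmt_2_general p hp hpmod k hk
end

section
/- Let p > 3 be a prime with p ≡ 1 (mod 3), let k ∈ ZMod p with k ≠ 0, and suppose that the number N_p(k) of F_p-rational points (including the point at infinity) of the curve y² = x³ + k over F_p is a prime number. Then either k is neither a square nor a cube in ZMod p, or p = 7 and k = 4 in ZMod 7 (in which case N_7(4) = 3). -/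
open Finset Polynomial

section CharacterSums

variable {F : Type*} [Field F] [Fintype F]

lemma FiniteField.exists_isPrimitiveRoot {n : ℕ} (hdvd : n ∣ Fintype.card F - 1) :
    ∃ ζ : F, IsPrimitiveRoot ζ n := by
  classical
  obtain ⟨g, hg⟩ := IsCyclic.exists_generator (α := Fˣ)
  have hg' : IsPrimitiveRoot (g : F) (Fintype.card F - 1) := by
    rw [IsPrimitiveRoot.coe_units_iff, ← Fintype.card_units, ← Nat.card_eq_fintype_card,
      ← orderOf_eq_card_of_forall_mem_zpowers hg]
    exact IsPrimitiveRoot.orderOf g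
  obtain ⟨m, hm⟩ := hdvd
  exact ⟨_, hg'.pow (Nat.sub_pos_of_lt Fintype.one_lt_card) (hm.trans (mul_comm _ _))⟩

namespace MulChar

lemma norm_apply_eq_one (χ : MulChar F ℂ) {a : F} (ha : a ≠ 0) : ‖χ a‖ = 1 := by
  classical
  simpa [coe_equivToUnitHom] using
    Complex.norm_eq_one_of_mem_rootsOfUnity (χ.apply_mem_rootsOfUnity (Units.mk0 a ha))

omit [Fintype F] in
lemma orderOf_apply_eq_of_forall_mem_zpowers {R : Type*} [CommMonoidWithZero R]
    (χ : MulChar F R) {g : Fˣ} (hg : ∀ x, x ∈ Subgroup.zpowers g) : orderOf (χ g) = orderOf χ :=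
  orderOf_eq_orderOf_iff.mpr fun n => by
    rw [eq_iff hg, pow_apply_coe, one_apply_coe]

lemma exists_pow_orderOf_eq_of_apply_eq_one {R : Type*} [CommMonoidWithZero R]
    (χ : MulChar F R) {a : F} (ha : a ≠ 0) (h : χ a = 1) : ∃ b : F, b ^ orderOf χ = a := by
  obtain ⟨g, hg⟩ := IsCyclic.exists_generator (α := Fˣ)
  obtain ⟨m, hm⟩ := (Submonoid.mem_powers_iff _ _).mp
    (mem_powers_iff_mem_zpowers.mpr (hg (Units.mk0 a ha)))
  have hgm : (g : F) ^ m = a := by rw [← Units.val_pow_eq_pow_val, hm, Units.val_mk0]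
  obtain ⟨j, rfl⟩ : orderOf χ ∣ m := by
    rw [← orderOf_apply_eq_of_forall_mem_zpowers χ hg, orderOf_dvd_iff_pow_eq_one, ← map_pow,
      hgm, h]
  exact ⟨(g : F) ^ j, by rw [← pow_mul, mul_comm, hgm]⟩

/- The sum is over powers of the value `ψ t`, not over `(ψ ^ j) t`, so that its `j = 0` term is
`1` also at `t = 0`. -/
lemma card_pow_orderOf_eq_sum [DecidableEq F] (ψ : MulChar F ℂ) (t : F) :
    (#{x | x ^ orderOf ψ = t} : ℂ) = ∑ j ∈ range (orderOf ψ), ψ t ^ j := by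
  have hn : 0 < orderOf ψ := ψ.orderOf_pos
  by_cases ht : t = 0
  · have h0 : ({x | x ^ orderOf ψ = 0} : Finset F) = {0} := by
      ext x; simp [pow_eq_zero_iff hn.ne']
    rw [ht, h0]
    simp [hn.ne']
  obtain ⟨ζ, hζ⟩ := FiniteField.exists_isPrimitiveRoot (ψ.orderOf_dvd_card_sub_one)
  have hcard : #{x | x ^ orderOf ψ = t} = Multiset.card (nthRoots (orderOf ψ) t) := by
    rw [← Multiset.toFinset_card_of_nodup (hζ.nthRoots_nodup ht)]
    congr 1
    ext x
    simp [mem_nthRoots hn]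
  rw [hcard, hζ.card_nthRoots]
  split_ifs with hroot
  · obtain ⟨s, rfl⟩ := hroot
    have hs : s ≠ 0 := by rintro rfl; exact ht (zero_pow hn.ne')
    rw [map_pow, ← pow_apply' ψ hn.ne', pow_orderOf_eq_one, one_apply hs.isUnit]
    simp
  · have hψt : ψ t ≠ 1 := fun h => hroot (ψ.exists_pow_orderOf_eq_of_apply_eq_one ht h)
    rw [geom_sum_eq hψt, ← pow_apply' ψ hn.ne', pow_orderOf_eq_one,
      one_apply (isUnit_iff_ne_zero.mpr ht)]
    simp

lemma sum_apply_pow_orderOf (ψ : MulChar F ℂ) (f : F → ℂ) :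
    ∑ x, f (x ^ orderOf ψ) = ∑ t, (∑ j ∈ range (orderOf ψ), ψ t ^ j) * f t := by
  classical
  rw [← sum_fiberwise univ (· ^ orderOf ψ)]
  refine sum_congr rfl fun t _ => ?_
  rw [← card_pow_orderOf_eq_sum, ← nsmul_eq_mul, ← sum_const]
  exact sum_congr rfl fun x hx => by rw [(mem_filter.mp hx).2]

lemma sum_apply_pow_three {ψ : MulChar F ℂ} (hψ : orderOf ψ = 3) (f : F → ℂ) :
    ∑ x, f (x ^ 3) = ∑ t, f t + ∑ t, ψ t * f t + ∑ t, (ψ ^ 2) t * f t := by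
  have h := ψ.sum_apply_pow_orderOf f
  rw [hψ] at h
  simp only [h, sum_range_succ, sum_range_zero, zero_add, pow_zero, pow_one,
    ← pow_apply' ψ two_ne_zero, add_mul, one_mul, sum_add_distrib]

end MulChar

lemma sum_mul_apply_add_eq_jacobiSum {R : Type*} [CommRing R] (φ χ : MulChar F R) {k : F}
    (hk : k ≠ 0) : ∑ t, φ t * χ (t + k) = φ (-k) * χ k * jacobiSum φ χ := by
  rw [jacobiSum, mul_sum]
  refine (Fintype.sum_equiv (Equiv.mulLeft₀ (-k) (neg_ne_zero.mpr hk)) _ _ fun x => ?_).symm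
  rw [Equiv.mulLeft₀_apply, show -k * x + k = k * (1 - x) by ring, map_mul, map_mul]
  ring

lemma jacobiSum_star (φ χ : MulChar F ℂ) : star (jacobiSum φ χ) = jacobiSum φ⁻¹ χ⁻¹ := by
  rw [← MulChar.star_eq_inv, ← MulChar.star_eq_inv]
  exact (jacobiSum_ringHomComp φ χ (starRingEnd ℂ)).symm

lemma norm_jacobiSum_sq {φ χ : MulChar F ℂ} (hφ : φ ≠ 1) (hχ : χ ≠ 1) (hφχ : φ * χ ≠ 1) :
    ‖jacobiSum φ χ‖ ^ 2 = Fintype.card F := by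
  classical
  have hchar : ringChar ℂ ≠ ringChar F := by
    rw [ringChar.eq_zero]; exact (CharP.char_is_prime F (ringChar F)).ne_zero.symm
  have h := jacobiSum_mul_jacobiSum_inv hchar hφ hχ hφχ
  rw [← jacobiSum_star, RCLike.star_def, Complex.mul_conj, Complex.normSq_eq_norm_sq] at h
  exact_mod_cast h

lemma norm_sum_mul_apply_add_sq {φ χ : MulChar F ℂ} (hφ : φ ≠ 1) (hχ : χ ≠ 1) (hφχ : φ * χ ≠ 1)
    {k : F} (hk : k ≠ 0) : ‖∑ t, φ t * χ (t + k)‖ ^ 2 = Fintype.card F := by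
  rw [sum_mul_apply_add_eq_jacobiSum φ χ hk, norm_mul, norm_mul,
    φ.norm_apply_eq_one (neg_ne_zero.mpr hk), χ.norm_apply_eq_one hk, one_mul, one_mul,
    norm_jacobiSum_sq hφ hχ hφχ]

theorem sum_quadraticChar_pow_three_add_sq_le [DecidableEq F] (hF : ringChar F ≠ 2)
    (h3 : Fintype.card F % 3 = 1) {k : F} (hk : k ≠ 0) :
    (∑ x, quadraticChar F (x ^ 3 + k)) ^ 2 ≤ 4 * Fintype.card F := by
  set χ : MulChar F ℂ := (quadraticChar F).ringHomComp (Int.castRingHom ℂ)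
  have hχ : χ ≠ 1 :=
    (MulChar.ringHomComp_ne_one_iff Int.cast_injective).mpr (quadraticChar_ne_one hF)
  have hχ2 : orderOf χ = 2 :=
    orderOf_eq_prime ((quadraticChar_isQuadratic F).comp _).sq_eq_one hχ
  obtain ⟨ψ, hψ⟩ := MulChar.exists_mulChar_orderOf F (n := 3) (by omega)
    (Complex.isPrimitiveRoot_exp 3 (by norm_num))
  have hterm : ∀ φ : MulChar F ℂ, orderOf φ = 3 →
      ‖∑ t, φ t * χ (t + k)‖ ^ 2 = Fintype.card F := fun φ hφ =>
    norm_sum_mul_apply_add_sq (by rintro rfl; simp at hφ) hχ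
      (fun h => by simp [eq_inv_of_mul_eq_one_left h, orderOf_inv, hχ2] at hφ) hk
  have hψ2 : orderOf (ψ ^ 2) = 3 := by
    rw [Nat.Coprime.orderOf_pow (by rw [hψ]; norm_num), hψ]
  have hshift : ∑ t, χ (t + k) = 0 :=
    (Fintype.sum_equiv (Equiv.addRight k) _ _ fun _ => rfl).trans
      (MulChar.sum_eq_zero_of_ne_one hχ)
  have hsplit : ((∑ x, quadraticChar F (x ^ 3 + k) : ℤ) : ℂ) =
      ∑ t, ψ t * χ (t + k) + ∑ t, (ψ ^ 2) t * χ (t + k) := by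
    push_cast
    change ∑ x, χ (x ^ 3 + k) = _
    rw [MulChar.sum_apply_pow_three hψ (fun t => χ (t + k)), hshift, zero_add]
  set A := ∑ t, ψ t * χ (t + k)
  set B := ∑ t, (ψ ^ 2) t * χ (t + k)
  set T := ∑ x, quadraticChar F (x ^ 3 + k)
  have hnorm : |(T : ℝ)| ≤ ‖A‖ + ‖B‖ := by
    rw [← Complex.norm_intCast, hsplit]
    exact norm_add_le A B
  have hsq : ((T : ℝ)) ^ 2 ≤ 4 * Fintype.card F :=
    calc ((T : ℝ)) ^ 2 = |(T : ℝ)| ^ 2 := (sq_abs _).symm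
      _ ≤ (‖A‖ + ‖B‖) ^ 2 := pow_le_pow_left₀ (abs_nonneg _) hnorm 2
      _ ≤ 2 * (‖A‖ ^ 2 + ‖B‖ ^ 2) := by nlinarith [sq_nonneg (‖A‖ - ‖B‖)]
      _ = 4 * Fintype.card F := by rw [hterm ψ hψ, hterm _ hψ2]; ring
  exact_mod_cast hsq

end CharacterSums

namespace WeierstrassCurve

variable {R : Type*} [CommRing R]

def mordell (k : R) : WeierstrassCurve R := ⟨0, 0, 0, 0, k⟩

instance (k : R) : (mordell k).IsShortNF := ⟨rfl, rfl, rfl⟩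

lemma Δ_mordell (k : R) : (mordell k).Δ = -432 * k ^ 2 := by
  rw [Δ_of_isShortNF]; simp [mordell]; ring

lemma equation_mordell_iff (k x y : R) :
    (mordell k).toAffine.Equation x y ↔ y ^ 2 = x ^ 3 + k := by
  rw [Affine.equation_iff]; simp [mordell]

variable {F : Type*} [Field F]

lemma isElliptic_mordell (h2 : (2 : F) ≠ 0) (h3 : (3 : F) ≠ 0) {k : F} (hk : k ≠ 0) :
    (mordell k).IsElliptic := by
  rw [isElliptic_iff, Δ_mordell, isUnit_iff_ne_zero]
  have : (432 : F) = 2 ^ 4 * 3 ^ 3 := by norm_num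
  rw [this]
  exact mul_ne_zero (neg_ne_zero.mpr (mul_ne_zero (pow_ne_zero 4 h2) (pow_ne_zero 3 h3)))
    (pow_ne_zero 2 hk)

namespace Affine

lemma natCard_point_eq_add_sum_quadraticChar [Fintype F] [DecidableEq F] (hF : ringChar F ≠ 2)
    (W : Affine F) [W.IsCharNeTwoNF] [W.IsElliptic] :
    (Nat.card W.Point : ℤ) = Fintype.card F + 1 +
      ∑ x, quadraticChar F (x ^ 3 + W.a₂ * x ^ 2 + W.a₄ * x + W.a₆) := by
  set f : F → F := fun x => x ^ 3 + W.a₂ * x ^ 2 + W.a₄ * x + W.a₆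
  have hcurve : {xy : F × F // W.Equation xy.1 xy.2} ≃ Σ x : F, {y : F // y ^ 2 = f x} :=
    (Equiv.subtypeEquivRight fun xy => by
      simp [equation_iff, a₁_of_isCharNeTwoNF, a₃_of_isCharNeTwoNF, f]).trans
    (Equiv.subtypeProdEquivSigmaSubtype fun x y => y ^ 2 = f x)
  have hfiber (a : F) : (Fintype.card {y : F // y ^ 2 = a} : ℤ) = quadraticChar F a + 1 := by
    rw [← quadraticChar_card_sqrts hF a, Set.toFinset_card]
    rfl
  rw [Nat.card_congr (W.pointEquiv.trans (Equiv.optionCongr hcurve)), Nat.card_eq_fintype_card,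
    Fintype.card_option, Fintype.card_sigma]
  push_cast
  simp only [hfiber, sum_add_distrib, sum_const, card_univ, nsmul_eq_mul, mul_one]
  ring

lemma Point.two_dvd_natCard {W : Affine F} {x y : F} (h : W.Nonsingular x y)
    (hy : y = W.negY x y) : 2 ∣ Nat.card W.Point := by
  classical
  have hP : 2 • Point.some x y h = 0 := by rw [two_nsmul]; exact Point.add_self_of_Y_eq hy
  exact addOrderOf_eq_prime hP (Point.some_ne_zero h) ▸ addOrderOf_dvd_natCard _

end Affine

lemma two_dvd_natCard_point_mordell (h3 : (3 : F) ≠ 0) {v : F} (hv : v ≠ 0) :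
    2 ∣ Nat.card (mordell (v ^ 3)).toAffine.Point := by
  have h : (mordell (v ^ 3)).toAffine.Nonsingular (-v) 0 := by
    rw [Affine.nonsingular_iff', equation_mordell_iff]
    refine ⟨by ring, Or.inl ?_⟩
    simpa [mordell] using mul_ne_zero h3 (pow_ne_zero 2 hv)
  exact Affine.Point.two_dvd_natCard h (by simp [Affine.negY, mordell])

lemma three_dvd_natCard_point_mordell (h2 : (2 : F) ≠ 0) {u : F} (hu : u ≠ 0) :
    3 ∣ Nat.card (mordell (u ^ 2)).toAffine.Point := by
  classical
  set W := (mordell (u ^ 2)).toAffine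
  have hy : u ≠ W.negY 0 u := by
    simp only [Affine.negY, W, mordell]
    intro h
    exact hu ((mul_eq_zero.mp (by linear_combination h : 2 * u = 0)).resolve_left h2)
  have h : W.Nonsingular 0 u := by
    rw [Affine.nonsingular_iff, equation_mordell_iff]
    exact ⟨by ring, Or.inr hy⟩
  have hdouble : Affine.Point.some 0 u h + .some 0 u h = -.some 0 u h := by
    rw [Affine.Point.add_self_of_Y_ne hy, Affine.Point.neg_some, Affine.Point.some.injEq,
      Affine.slope_of_Y_ne rfl hy]
    simp [W, mordell, Affine.addX, Affine.addY, Affine.negAddY, Affine.negY]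
  have hP : 3 • Affine.Point.some 0 u h = 0 := by
    rw [succ_nsmul, two_nsmul, hdouble, neg_add_cancel]
  exact addOrderOf_eq_prime hP (Affine.Point.some_ne_zero h) ▸ addOrderOf_dvd_natCard _

end WeierstrassCurve

lemma ZMod.sq_eq_four_of_sum_quadraticChar_eq [Fact (Nat.Prime 7)] :
    ∀ u : ZMod 7, u ≠ 0 →
      ∑ x : ZMod 7, quadraticChar (ZMod 7) (x ^ 3 + u ^ 2) = -5 → u ^ 2 = 4 := by
  decide +revert

lemma ZMod.natCast_ne_zero_of_pos_of_lt {n p : ℕ} (hn : 0 < n) (hnp : n < p) :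
    (n : ZMod p) ≠ 0 := by
  rw [Ne, ZMod.natCast_eq_zero_iff]
  exact Nat.not_dvd_of_pos_of_lt hn hnp

lemma Npts_eq_natCard_point_mordell (p : ℕ) (k : ZMod p) :
    Npts p k = Nat.card (WeierstrassCurve.mordell k).toAffine.Point :=
  rfl

lemma Npts_eq_add_sum_quadraticChar {p : ℕ} [Fact p.Prime] (hchar : ringChar (ZMod p) ≠ 2)
    (h3 : (3 : ZMod p) ≠ 0) {k : ZMod p} (hk : k ≠ 0) :
    (Npts p k : ℤ) = p + 1 + ∑ x, quadraticChar (ZMod p) (x ^ 3 + k) := by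
  have := WeierstrassCurve.isElliptic_mordell (Ring.two_ne_zero hchar) h3 hk
  rw [Npts_eq_natCard_point_mordell,
    WeierstrassCurve.Affine.natCard_point_eq_add_sum_quadraticChar hchar]
  simp [ZMod.card, WeierstrassCurve.mordell]

theorem stmt_3_general (p : ℕ) (hp : p.Prime) (hpmod : p % 3 = 1)
    (k : ZMod p) (hk : k ≠ 0) (hN : (Npts p k).Prime) :
    (¬(∃ u : ZMod p, u ^ 2 = k) ∧ ¬(∃ u : ZMod p, u ^ 3 = k)) ∨
      (p = 7 ∧ k = (4 : ZMod p) ∧ Npts p k = 3) := by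
  have : Fact p.Prime := ⟨hp⟩
  have hp7 : 7 ≤ p := by
    have : p ≠ 4 := by rintro rfl; norm_num at hp
    have := hp.two_le
    omega
  have hchar : ringChar (ZMod p) ≠ 2 := by rw [ZMod.ringChar_zmod_n]; omega
  have h3 : (3 : ZMod p) ≠ 0 := by
    exact_mod_cast ZMod.natCast_ne_zero_of_pos_of_lt three_pos (by omega : 3 < p)
  have hcount := Npts_eq_add_sum_quadraticChar hchar h3 hk
  have hbound := sum_quadraticChar_pow_three_add_sq_le hchar (by rwa [ZMod.card]) hk
  rw [ZMod.card] at hbound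
  have hcube : ¬∃ v : ZMod p, v ^ 3 = k := by
    rintro ⟨v, rfl⟩
    have hN2 : Npts p (v ^ 3) = 2 := ((Nat.prime_dvd_prime_iff_eq Nat.prime_two hN).mp
      (WeierstrassCurve.two_dvd_natCard_point_mordell h3 (by rintro rfl; simp at hk))).symm
    rw [hN2, Nat.cast_ofNat] at hcount
    nlinarith
  by_cases hsq : ∃ u : ZMod p, u ^ 2 = k
  · obtain ⟨u, rfl⟩ := hsq
    have hu : u ≠ 0 := by rintro rfl; simp at hk
    have hN3 : Npts p (u ^ 2) = 3 := ((Nat.prime_dvd_prime_iff_eq Nat.prime_three hN).mp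
      (WeierstrassCurve.three_dvd_natCard_point_mordell (Ring.two_ne_zero hchar) hu)).symm
    rw [hN3, Nat.cast_ofNat] at hcount
    obtain rfl : p = 7 := by nlinarith
    push_cast at hcount
    exact Or.inr ⟨rfl, ZMod.sq_eq_four_of_sum_quadraticChar_eq u hu (by linarith), hN3⟩
  · exact Or.inl ⟨hsq, hcube⟩

/-- Corollary 2.5: if `p > 3` is prime with `p ≡ 1 (mod 3)`, `k ≠ 0`, and the curve
`y² = x³ + k` has a prime number of points over `F_p`, then `k` is neither a square nor a cube
modulo `p`, except when `p = 7` and `k = 4` (in which case the order is `3`). -/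
theorem stmt_3 (p : ℕ) (hp : p.Prime) (hp3 : 3 < p) (hpmod : p % 3 = 1)
    (k : ZMod p) (hk : k ≠ 0) (hN : (Npts p k).Prime) :
    (¬(∃ u : ZMod p, u ^ 2 = k) ∧ ¬(∃ u : ZMod p, u ^ 3 = k)) ∨
      (p = 7 ∧ k = (4 : ZMod p) ∧ Npts p k = 3) :=
  stmt_3_general p hp hpmod k hk hN
end

section
/- Let p > 7 be a prime. Then the set of prime numbers q for which there exists k ∈ ZMod p with k ≠ 0 such that the curve y² = x³ + k over F_p has exactly q points (including the point at infinity) has at most 2 elements, and every prime q in this set satisfies q ≡ 1 (mod 3). -/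
open Finset

lemma Set.encard_le_two_of_forall_eq_or_eq_or_eq {α : Type*} {s : Set α}
    (h : ∀ a ∈ s, ∀ b ∈ s, ∀ c ∈ s, a = b ∨ a = c ∨ b = c) : s.encard ≤ 2 := by
  by_contra! hs
  obtain ⟨t, hts, ht⟩ := Set.exists_subset_encard_eq (Order.add_one_le_of_lt hs)
  obtain ⟨a, b, c, hab, hac, hbc, rfl⟩ := Set.encard_eq_three.mp ht
  rcases h a (hts (by simp)) b (hts (by simp)) c (hts (by simp)) with h | h | h <;> contradiction

lemma eq_or_eq_or_eq_of_sq_sub_self_add_one_eq_zero {R : Type*} [CommRing R] [IsDomain R]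
    {a b c : R} (ha : a ^ 2 - a + 1 = 0) (hb : b ^ 2 - b + 1 = 0) (hc : c ^ 2 - c + 1 = 0) :
    a = b ∨ a = c ∨ b = c := by
  by_contra! h
  have hsum : ∀ {x y : R}, x ≠ y → x ^ 2 - x + 1 = 0 → y ^ 2 - y + 1 = 0 → x + y = 1 :=
    fun hxy hx hy => mul_left_cancel₀ (sub_ne_zero.mpr hxy) (by linear_combination hx - hy)
  exact h.2.2 (by linear_combination hsum h.1 ha hb - hsum h.2.1 ha hc)

lemma sum_mod_eq_card_filter_mod {ι : Type*} [Fintype ι] {m : ℕ} (f : ι → ℕ) (P : ι → Prop)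
    [DecidablePred P] (h : ∀ i, f i % m = if P i then 1 else 0) :
    (∑ i, f i) % m = #{i | P i} % m := by
  rw [sum_nat_mod, sum_congr rfl fun i _ => h i, sum_boole, Nat.cast_id]

lemma sum_sq_card_fiber {α β : Type*} [Fintype α] [Fintype β] [DecidableEq β] (f : α → β) :
    ∑ b : β, #{a | f a = b} ^ 2 = #{x : α × α | f x.1 = f x.2} := by
  rw [card_eq_sum_card_fiberwise (f := fun x : α × α => f x.1) (t := univ) fun _ _ => mem_univ _]
  refine sum_congr rfl fun b _ => ?_
  rw [sq, ← card_product, filter_filter]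
  congr 1
  ext x
  simp only [mem_product, mem_filter, mem_univ, true_and]
  constructor
  · rintro ⟨h1, h2⟩; exact ⟨h1.trans h2.symm, h1⟩
  · rintro ⟨h1, h2⟩; exact ⟨h2, h1.symm.trans h2⟩

lemma card_filter_pow_six_mul_eq_le {K : Type*} [Field K] [DecidableEq K] {k : K} (hk : k ≠ 0)
    (s : Finset K) (b : K) : #{u ∈ s | u ^ 6 * k = b} ≤ 6 := by
  have hsub : {u ∈ s | u ^ 6 * k = b} ⊆ Polynomial.nthRootsFinset 6 (b / k) := fun u hu => by
    rw [Polynomial.mem_nthRootsFinset (by norm_num), eq_div_iff hk, (mem_filter.mp hu).2]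
  calc #{u ∈ s | u ^ 6 * k = b} ≤ #(Polynomial.nthRootsFinset 6 (b / k)) := card_le_card hsub
    _ ≤ Multiset.card (Polynomial.nthRoots 6 (b / k)) := by
      rw [Polynomial.nthRootsFinset_def]; exact Multiset.toFinset_card_le _
    _ ≤ 6 := Polynomial.card_nthRoots 6 _

lemma isElliptic_mordell {K : Type*} [Field K] {k : K} (h6 : (6 : K) ≠ 0) (hk : k ≠ 0) :
    (⟨0, 0, 0, 0, k⟩ : WeierstrassCurve K).IsElliptic := by
  have hΔ : (⟨0, 0, 0, 0, k⟩ : WeierstrassCurve K).Δ = -2 * 6 ^ 3 * k ^ 2 := by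
    simp only [WeierstrassCurve.Δ, WeierstrassCurve.b₂, WeierstrassCurve.b₄,
      WeierstrassCurve.b₆, WeierstrassCurve.b₈]
    ring
  have h2 : (2 : K) ≠ 0 := fun h => h6 (by linear_combination 3 * h)
  rw [WeierstrassCurve.isElliptic_iff, hΔ, isUnit_iff_ne_zero]
  simp [h2, h6, hk]

section FiniteField

variable {F : Type*} [Field F] [Fintype F] [DecidableEq F]

lemma exists_isPrimitiveRoot_three (h3 : Fintype.card F % 3 = 1) :
    ∃ ζ : F, IsPrimitiveRoot ζ 3 := by
  have : 3 ∣ Fintype.card Fˣ := by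
    have := Fintype.card_units (α := F)
    omega
  obtain ⟨ζ, hζ⟩ := exists_prime_orderOf_dvd_card 3 this
  exact ⟨ζ, IsPrimitiveRoot.coe_units_iff.mpr (hζ ▸ IsPrimitiveRoot.orderOf ζ)⟩

lemma card_cbrts_pow_three (h3 : Fintype.card F % 3 = 1) {c : F} (hc : c ≠ 0) :
    #{x : F | x ^ 3 = c ^ 3} = 3 := by
  obtain ⟨ζ, hζ⟩ := exists_isPrimitiveRoot_three h3
  have : ({x : F | x ^ 3 = c ^ 3} : Finset F) = Polynomial.nthRootsFinset 3 (c ^ 3) := by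
    ext x
    simp [Polynomial.mem_nthRootsFinset]
  rw [this, Polynomial.nthRootsFinset_def,
    Multiset.toFinset_card_of_nodup (hζ.nthRoots_nodup (pow_ne_zero 3 hc)), hζ.card_nthRoots,
    if_pos ⟨c, rfl⟩]

lemma card_cbrts_mod_three (h3 : Fintype.card F % 3 = 1) (v : F) :
    #{x : F | x ^ 3 = v} % 3 = if v = 0 then 1 else 0 := by
  rcases eq_or_ne v 0 with rfl | hv
  · simp [filter_eq']
  rw [if_neg hv]
  by_cases hcube : ∃ c, c ^ 3 = v
  · obtain ⟨c, rfl⟩ := hcube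
    rw [card_cbrts_pow_three h3 (by rintro rfl; simp at hv)]
  · rw [card_eq_zero.mpr (filter_eq_empty_iff.mpr fun x _ hx => hcube ⟨x, hx⟩)]

lemma sum_card_cbrts_pow_three (h3 : Fintype.card F % 3 = 1) :
    ∑ x : F, #{x' : F | x' ^ 3 = x ^ 3} = 3 * Fintype.card F - 2 := by
  rw [Fintype.sum_eq_add_sum_compl 0,
    sum_congr rfl fun x hx => card_cbrts_pow_three h3 (by simpa using hx), sum_const, card_compl,
    card_singleton]
  simp only [ne_eq, OfNat.ofNat_ne_zero, not_false_eq_true, zero_pow, pow_eq_zero_iff,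
    filter_eq', mem_univ, if_true, card_singleton, smul_eq_mul]
  have := Fintype.card_pos (α := F)
  omega

lemma card_cbrts_of_card_mod_three_eq_two (h3 : Fintype.card F % 3 = 2) (v : F) :
    #{x : F | x ^ 3 = v} = 1 := by
  have hinj : Function.Injective fun x : F => x ^ 3 := by
    intro x y (hxy : x ^ 3 = y ^ 3)
    rcases eq_or_ne y 0 with rfl | hy
    · exact pow_eq_zero_iff three_ne_zero |>.mp (hxy.trans (zero_pow three_ne_zero))
    have hcop : Nat.Coprime 3 (Fintype.card F - 1) :=
      (Nat.Prime.coprime_iff_not_dvd Nat.prime_three).mpr (by omega)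
    have h1 : (x / y) ^ 3 = 1 := by rw [div_pow, hxy, div_self (pow_ne_zero 3 hy)]
    have h2 := FiniteField.pow_card_sub_one_eq_one (x / y) fun h => by simp [h] at h1
    exact div_eq_one_iff_eq hy |>.mp ((pow_eq_one_iff_of_coprime hcop).mp ⟨h1, h2⟩)
  obtain ⟨c, rfl⟩ := (Finite.injective_iff_surjective.mp hinj) v
  exact card_eq_one.mpr ⟨c, by ext x; simpa using hinj.eq_iff⟩

lemma card_sqrts_eq (hF : ringChar F ≠ 2) (v : F) :
    (#{y : F | y ^ 2 = v} : ℤ) = quadraticChar F v + 1 := by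
  rw [← quadraticChar_card_sqrts hF, Set.toFinset_ofPred]

lemma card_sqrts_mod_two (hF : ringChar F ≠ 2) (v : F) :
    #{y : F | y ^ 2 = v} % 2 = if v = 0 then 1 else 0 := by
  have h := card_sqrts_eq hF v
  rcases eq_or_ne v 0 with rfl | hv
  · rw [MulChar.map_zero] at h
    rw [if_pos rfl]; omega
  · rw [if_neg hv]
    rcases quadraticChar_dichotomy hv with hχ | hχ <;> rw [hχ] at h <;> omega

lemma card_sqrts_add_card_sqrts_pow_three_mul (hF : ringChar F ≠ 2) {d : F} (hd : ¬IsSquare d)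
    (w : F) : #{y : F | y ^ 2 = w} + #{y : F | y ^ 2 = d ^ 3 * w} = 2 := by
  zify
  rw [card_sqrts_eq hF, card_sqrts_eq hF, map_mul, map_pow,
    quadraticChar_neg_one_iff_not_isSquare.mpr hd]
  ring

lemma card_filter_mul_eq (d : F) :
    #{P : F × F | P.1 * P.2 = d} = Fintype.card F - 1 + if d = 0 then Fintype.card F else 0 := by
  have hfib : ∀ u : F, u ≠ 0 → #{v : F | u * v = d} = 1 := fun u hu =>
    card_eq_one.mpr ⟨d / u, by ext v; simp [eq_div_iff hu, mul_comm]⟩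
  rw [card_filter, Fintype.sum_prod_type, Fintype.sum_eq_add_sum_compl 0,
    sum_congr rfl fun u hu => (card_filter _ _).symm.trans (hfib u (by simpa using hu)),
    sum_const, card_compl, card_singleton, smul_eq_mul, mul_one, add_comm]
  congr 1
  split_ifs with hd <;> simp [hd, eq_comm]

lemma card_sq_sub_sq_eq (hF : ringChar F ≠ 2) (d : F) :
    #{Y : F × F | Y.2 ^ 2 - Y.1 ^ 2 = d} = #{P : F × F | P.1 * P.2 = d} := by
  have h2 : (2 : F) ≠ 0 := Ring.two_ne_zero hF
  refine card_nbij' (fun Y => (Y.2 - Y.1, Y.2 + Y.1))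
    (fun P => ((P.2 - P.1) / 2, (P.2 + P.1) / 2)) ?_ ?_ ?_ ?_ <;>
    simp only [Set.MapsTo, Set.LeftInvOn, coe_filter, mem_univ, true_and, Set.mem_ofPred_eq,
      Prod.forall, Prod.mk.injEq]
  · intro y y' h
    linear_combination h
  · intro u v h
    field_simp
    linear_combination 4 * h
  · intro y y' _
    constructor <;> field_simp <;> ring
  · intro u v _
    constructor <;> field_simp <;> ring

lemma exists_pow_eq_of_pow_eq_one {n t : ℕ} (hnt : Fintype.card F - 1 = n * t) {a : F}
    (ha : a ≠ 0) (h : a ^ t = 1) : ∃ c : F, c ^ n = a := by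
  obtain ⟨g, hg⟩ := IsCyclic.exists_monoid_generator (α := Fˣ)
  obtain ⟨m, hm : g ^ m = Units.mk0 a ha⟩ := hg (Units.mk0 a ha)
  have ht : 0 < t := Nat.pos_of_ne_zero fun ht => by
    have := Fintype.one_lt_card (α := F)
    simp [ht] at hnt
    omega
  have hdvd : n * t ∣ m * t := by
    rw [← hnt, ← Fintype.card_units, ← Nat.card_eq_fintype_card,
      ← orderOf_eq_card_of_forall_mem_powers hg]
    refine orderOf_dvd_of_pow_eq_one ?_
    rw [pow_mul, hm, Units.ext_iff, Units.val_pow_eq_pow_val, Units.val_mk0, h, Units.val_one]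
  obtain ⟨r, rfl⟩ := (Nat.mul_dvd_mul_iff_right ht).mp hdvd
  exact ⟨(g ^ r : Fˣ), by rw [← Units.val_pow_eq_pow_val, ← pow_mul, mul_comm, hm, Units.val_mk0]⟩

def sexticSymbol (k : F) : F := k ^ ((Fintype.card F - 1) / 6)

lemma sexticSymbol_sq_sub_self_add_one (hF : ringChar F ≠ 2) (h3 : Fintype.card F % 3 = 1)
    {k : F} (hk : k ≠ 0) (hsq : ¬IsSquare k) (hcube : ¬∃ c, c ^ 3 = k) :
    sexticSymbol k ^ 2 - sexticSymbol k + 1 = 0 := by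
  have hodd := FiniteField.odd_card_of_char_ne_two hF
  set m := (Fintype.card F - 1) / 6
  have hcube_neg : sexticSymbol k ^ 3 = -1 := by
    rw [sexticSymbol, ← pow_mul, show m * 3 = Fintype.card F / 2 by omega]
    exact (FiniteField.pow_dichotomy hF hk).resolve_left
      fun h => hsq ((FiniteField.isSquare_iff hF hk).mpr h)
  have hsq_ne : sexticSymbol k ^ 2 ≠ 1 := fun h =>
    hcube (exists_pow_eq_of_pow_eq_one (by omega : Fintype.card F - 1 = 3 * (m * 2)) hk
      (by rwa [sexticSymbol, ← pow_mul] at h))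
  have hfac : (sexticSymbol k + 1) * (sexticSymbol k ^ 2 - sexticSymbol k + 1) = 0 := by
    linear_combination hcube_neg
  refine (mul_eq_zero.mp hfac).resolve_left fun h => hsq_ne ?_
  rw [eq_neg_of_add_eq_zero_left h]
  ring

def mordellPoints (k : F) : Finset (F × F) := {P | P.2 ^ 2 = P.1 ^ 3 + k}

lemma natCard_point_mordell {k : F} (h6 : (6 : F) ≠ 0) (hk : k ≠ 0) :
    Nat.card (WeierstrassCurve.toAffine (⟨0, 0, 0, 0, k⟩ : WeierstrassCurve F)).Point =
      #(mordellPoints k) + 1 := by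
  have := isElliptic_mordell h6 hk
  rw [Nat.card_congr (WeierstrassCurve.Affine.pointEquiv _)]
  change Nat.card (Option _) = _
  rw [Finite.card_option, Nat.card_congr (Equiv.subtypeEquivRight (q := (· ∈ mordellPoints k))
    fun P => by simp [mordellPoints, WeierstrassCurve.Affine.equation_iff]),
    Nat.card_eq_fintype_card, Fintype.card_coe]

lemma mordellPoints_eq_filter_sub (k : F) :
    mordellPoints k = ({P : F × F | P.2 ^ 2 - P.1 ^ 3 = k} : Finset (F × F)) := by
  simp only [mordellPoints, sub_eq_iff_eq_add']

lemma card_mordellPoints_eq_sum_sqrts (k : F) :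
    #(mordellPoints k) = ∑ x : F, #{y : F | y ^ 2 = x ^ 3 + k} := by
  rw [mordellPoints, card_filter, ← univ_product_univ, sum_product]
  simp only [card_filter]

lemma card_mordellPoints_eq_sum_cbrts (k : F) :
    #(mordellPoints k) = ∑ y : F, #{x : F | x ^ 3 = y ^ 2 - k} := by
  rw [mordellPoints, card_filter, ← univ_product_univ, sum_product, sum_comm]
  simp only [card_filter, eq_comm, sub_eq_iff_eq_add]

lemma card_mordellPoints_mod_three (h3 : Fintype.card F % 3 = 1) (k : F) :
    #(mordellPoints k) % 3 = #{y : F | y ^ 2 = k} % 3 := by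
  rw [card_mordellPoints_eq_sum_cbrts]
  refine sum_mod_eq_card_filter_mod _ _ fun y => ?_
  simp only [card_cbrts_mod_three h3, sub_eq_zero]

lemma card_mordellPoints_mod_three_of_not_isSquare (h3 : Fintype.card F % 3 = 1) {k : F}
    (hsq : ¬IsSquare k) : #(mordellPoints k) % 3 = 0 := by
  rw [card_mordellPoints_mod_three h3,
    card_eq_zero.mpr (filter_eq_empty_iff.mpr fun y _ hy => hsq ⟨y, by rw [← hy, sq]⟩)]

lemma card_mordellPoints_mod_two (hF : ringChar F ≠ 2) (k : F) :
    #(mordellPoints k) % 2 = #{x : F | x ^ 3 = -k} % 2 := by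
  rw [card_mordellPoints_eq_sum_sqrts]
  refine sum_mod_eq_card_filter_mod _ _ fun x => ?_
  simp only [card_sqrts_mod_two hF, add_eq_zero_iff_eq_neg]

lemma card_mordellPoints_of_card_mod_three_eq_two (h3 : Fintype.card F % 3 = 2) (k : F) :
    #(mordellPoints k) = Fintype.card F := by
  simp [card_mordellPoints_eq_sum_cbrts, card_cbrts_of_card_mod_three_eq_two h3]

lemma card_mordellPoints_pow_six_mul {u : F} (hu : u ≠ 0) (k : F) :
    #(mordellPoints (u ^ 6 * k)) = #(mordellPoints k) := by
  refine card_nbij' (fun P => (u⁻¹ ^ 2 * P.1, u⁻¹ ^ 3 * P.2))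
    (fun P => (u ^ 2 * P.1, u ^ 3 * P.2)) ?_ ?_ (fun _ _ => by simp [hu]) (fun _ _ => by simp [hu])
  all_goals
    simp only [Set.MapsTo, mordellPoints, coe_filter, mem_univ, true_and, Set.mem_ofPred_eq,
      Prod.forall]
    intro x y h
  · field_simp
    linear_combination h
  · linear_combination u ^ 6 * h

lemma card_mordellPoints_eq_of_sexticSymbol_eq (h6 : 6 ∣ Fintype.card F - 1) {a b : F}
    (ha : a ≠ 0) (hb : b ≠ 0) (h : sexticSymbol a = sexticSymbol b) :
    #(mordellPoints a) = #(mordellPoints b) := by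
  have hb' : sexticSymbol b ≠ 0 := pow_ne_zero _ hb
  obtain ⟨u, hu⟩ := exists_pow_eq_of_pow_eq_one (Nat.mul_div_cancel' h6).symm (div_ne_zero ha hb)
    (by rw [div_pow, ← sexticSymbol, ← sexticSymbol, h, div_self hb'])
  have hu0 : u ≠ 0 := by rintro rfl; simp [ha, hb, eq_comm] at hu
  rw [← card_mordellPoints_pow_six_mul hu0 b, hu, div_mul_cancel₀ a hb]

lemma card_mordellPoints_add_card_mordellPoints_pow_three_mul (hF : ringChar F ≠ 2) {d : F}
    (hd : ¬IsSquare d) (k : F) :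
    #(mordellPoints k) + #(mordellPoints (d ^ 3 * k)) = 2 * Fintype.card F := by
  have hd0 : d ≠ 0 := by rintro rfl; exact hd ⟨0, by ring⟩
  have htwist :
      #(mordellPoints (d ^ 3 * k)) = ∑ x : F, #{y : F | y ^ 2 = d ^ 3 * (x ^ 3 + k)} := by
    rw [card_mordellPoints_eq_sum_sqrts, ← Equiv.sum_comp (Equiv.mulLeft₀ d hd0)]
    simp only [Equiv.mulLeft₀_apply, mul_pow, mul_add]
  rw [card_mordellPoints_eq_sum_sqrts, htwist, ← sum_add_distrib,
    sum_congr rfl fun x _ => card_sqrts_add_card_sqrts_pow_three_mul hF hd _, sum_const,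
    card_univ, smul_eq_mul, mul_comm]

lemma sum_card_mordellPoints : ∑ k : F, #(mordellPoints k) = Fintype.card F ^ 2 := by
  simp_rw [mordellPoints_eq_filter_sub]
  rw [← card_eq_sum_card_fiberwise (fun P _ => mem_univ _), card_univ, Fintype.card_prod, sq]

lemma sum_sq_card_mordellPoints_eq_sum_card_sq_sub_sq :
    ∑ k : F, #(mordellPoints k) ^ 2 =
      ∑ x : F, ∑ x' : F, #{Y : F × F | Y.2 ^ 2 - Y.1 ^ 2 = x' ^ 3 - x ^ 3} := by
  simp_rw [mordellPoints_eq_filter_sub]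
  rw [sum_sq_card_fiber]
  simp_rw [card_filter, Fintype.sum_prod_type]
  refine sum_congr rfl fun x _ => ?_
  rw [sum_comm]
  refine sum_congr rfl fun x' _ => sum_congr rfl fun y _ => sum_congr rfl fun y' _ => ?_
  congr 1
  exact propext ⟨fun h => by linear_combination -h, fun h => by linear_combination -h⟩

/-- Each pair `(x, x')` contributes the `q - 1` points of the hyperbola `y'² - y² = x'³ - x³`,
plus `q` more when `x³ = x'³`, which happens for `3q - 2` pairs. -/
lemma sum_sq_card_mordellPoints (hF : ringChar F ≠ 2) (h3 : Fintype.card F % 3 = 1) :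
    ∑ k : F, #(mordellPoints k) ^ 2 =
      Fintype.card F ^ 2 * (Fintype.card F - 1) + Fintype.card F * (3 * Fintype.card F - 2) := by
  simp_rw [sum_sq_card_mordellPoints_eq_sum_card_sq_sub_sq, card_sq_sub_sq_eq hF,
    card_filter_mul_eq, sum_add_distrib, sub_eq_zero, sum_ite, sum_const_zero, add_zero,
    sum_const, card_univ, smul_eq_mul]
  rw [← sum_mul, ← sum_card_cbrts_pow_three h3]
  ring

lemma sum_sq_card_mordellPoints_sub_card (hF : ringChar F ≠ 2) (h3 : Fintype.card F % 3 = 1) :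
    ∑ k : F, ((#(mordellPoints k) : ℤ) - Fintype.card F) ^ 2 =
      2 * Fintype.card F ^ 2 - 2 * Fintype.card F := by
  have hq := Fintype.card_pos (α := F)
  have h1 : ∑ k : F, (#(mordellPoints k) : ℤ) = Fintype.card F ^ 2 := by
    exact_mod_cast sum_card_mordellPoints
  have h2 : ∑ k : F, (#(mordellPoints k) : ℤ) ^ 2 =
      Fintype.card F ^ 2 * (Fintype.card F - 1) + Fintype.card F * (3 * Fintype.card F - 2) := by
    have := congrArg (Nat.cast : ℕ → ℤ) (sum_sq_card_mordellPoints hF h3)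
    push_cast [Nat.cast_sub (by omega : 1 ≤ Fintype.card F),
      Nat.cast_sub (by omega : 2 ≤ 3 * Fintype.card F)] at this
    exact this
  simp_rw [sub_sq, sum_add_distrib, sum_sub_distrib, ← sum_mul, ← mul_sum, h1, h2, sum_const,
    card_univ, nsmul_eq_mul]
  ring

lemma card_sub_one_le_six_mul_card_filter_card_mordellPoints_eq {k : F} (hk : k ≠ 0) :
    Fintype.card F - 1 ≤ 6 * #{k' : F | #(mordellPoints k') = #(mordellPoints k)} := by
  have := card_le_mul_card_image_of_maps_to (s := univ.erase 0) (f := fun u => u ^ 6 * k)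
    (t := {k' | #(mordellPoints k') = #(mordellPoints k)})
    (fun u hu => mem_filter.mpr ⟨mem_univ _, card_mordellPoints_pow_six_mul (ne_of_mem_erase hu) k⟩)
    6 fun b _ => card_filter_pow_six_mul_eq_le hk _ b
  rwa [card_erase_of_mem (mem_univ _), card_univ] at this

lemma card_mordellPoints_ne_two (hF : ringChar F ≠ 2) (h3 : Fintype.card F % 3 = 1)
    (h11 : 11 ≤ Fintype.card F) {k : F} (hk : k ≠ 0) : #(mordellPoints k) ≠ 2 := by
  intro hA
  set q := Fintype.card F
  obtain ⟨d, hd⟩ := FiniteField.exists_nonsquare hF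
  have hdk : d ^ 3 * k ≠ 0 := mul_ne_zero (pow_ne_zero 3 (by rintro rfl; exact hd ⟨0, by ring⟩)) hk
  have hA' : #(mordellPoints (d ^ 3 * k)) = 2 * q - 2 := by
    have := card_mordellPoints_add_card_mordellPoints_pow_three_mul hF hd k
    omega
  set S : Finset F := {k' | #(mordellPoints k') = 2}
  set T : Finset F := {k' | #(mordellPoints k') = 2 * q - 2}
  have hS : q - 1 ≤ 6 * #S := by
    simpa only [hA] using card_sub_one_le_six_mul_card_filter_card_mordellPoints_eq hk
  have hT : q - 1 ≤ 6 * #T := by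
    simpa only [hA'] using card_sub_one_le_six_mul_card_filter_card_mordellPoints_eq hdk
  have hdisj : Disjoint S T := disjoint_filter.mpr fun _ _ h1 h2 => by omega
  have hval : ∀ k' ∈ S ∪ T, ((q : ℤ) - 2) ^ 2 ≤ ((#(mordellPoints k') : ℤ) - q) ^ 2 := by
    intro k' hk'
    rcases mem_union.mp hk' with h | h <;> rw [(mem_filter.mp h).2]
    · push_cast; nlinarith
    · rw [Nat.cast_sub (by omega)]; push_cast; nlinarith
  have hle : (#(S ∪ T) : ℤ) * ((q : ℤ) - 2) ^ 2 ≤ 2 * q ^ 2 - 2 * q := by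
    rw [← sum_sq_card_mordellPoints_sub_card hF h3, ← nsmul_eq_mul]
    exact (card_nsmul_le_sum _ _ _ hval).trans
      (sum_le_sum_of_subset_of_nonneg (subset_univ _) fun _ _ _ => sq_nonneg _)
  rw [card_union_of_disjoint hdisj, Nat.cast_add] at hle
  have hST : (q : ℤ) - 1 ≤ 3 * (#S + #T) := by omega
  have h11' : (11 : ℤ) ≤ q := by exact_mod_cast h11
  nlinarith [mul_le_mul_of_nonneg_right hST (sq_nonneg ((q : ℤ) - 2))]

lemma not_isSquare_of_prime (hF : ringChar F ≠ 2) (h3 : Fintype.card F % 3 = 1)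
    (h11 : 11 ≤ Fintype.card F) {k : F} (hk : k ≠ 0) (hq : (#(mordellPoints k) + 1).Prime) :
    ¬IsSquare k := by
  rintro ⟨c, rfl⟩
  rw [← sq] at hk hq
  have hsqrts : #{y : F | y ^ 2 = c ^ 2} = 2 := by
    have := card_sqrts_eq hF (c ^ 2)
    rw [quadraticChar_sq_one' (pow_ne_zero_iff two_ne_zero |>.mp hk)] at this
    omega
  have hmod := card_mordellPoints_mod_three h3 (c ^ 2)
  rw [hsqrts] at hmod
  rcases hq.eq_one_or_self_of_dvd 3 (by omega) with h | h
  · omega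
  · exact card_mordellPoints_ne_two hF h3 h11 hk (by omega)

lemma not_cube_of_prime (hF : ringChar F ≠ 2) (h3 : Fintype.card F % 3 = 1) {k : F}
    (hsq : ¬IsSquare k) (hq : (#(mordellPoints k) + 1).Prime) : ¬∃ c, c ^ 3 = k := by
  rintro ⟨c, rfl⟩
  have hc : c ≠ 0 := by rintro rfl; exact hsq ⟨0, by ring⟩
  have hmod2 := card_mordellPoints_mod_two hF (c ^ 3)
  rw [← Odd.neg_pow (by decide), card_cbrts_pow_three h3 (neg_ne_zero.mpr hc)] at hmod2
  have hmod3 := card_mordellPoints_mod_three_of_not_isSquare h3 hsq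
  rcases hq.eq_one_or_self_of_dvd 2 (by omega) with h | h <;> omega

lemma card_mordellPoints_add_one_mod_three_of_prime (hF : ringChar F ≠ 2)
    (h3 : Fintype.card F % 3 = 1) (h11 : 11 ≤ Fintype.card F) {k : F} (hk : k ≠ 0)
    (hq : (#(mordellPoints k) + 1).Prime) : (#(mordellPoints k) + 1) % 3 = 1 := by
  have := card_mordellPoints_mod_three_of_not_isSquare h3 (not_isSquare_of_prime hF h3 h11 hk hq)
  omega

lemma sexticSymbol_sq_sub_self_add_one_of_prime (hF : ringChar F ≠ 2)
    (h3 : Fintype.card F % 3 = 1) (h11 : 11 ≤ Fintype.card F) {k : F} (hk : k ≠ 0)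
    (hq : (#(mordellPoints k) + 1).Prime) : sexticSymbol k ^ 2 - sexticSymbol k + 1 = 0 :=
  have hsq := not_isSquare_of_prime hF h3 h11 hk hq
  sexticSymbol_sq_sub_self_add_one hF h3 hk hsq (not_cube_of_prime hF h3 hsq hq)

lemma encard_setOf_prime_card_mordellPoints_add_one_le_two (hF : ringChar F ≠ 2)
    (h3 : Fintype.card F % 3 = 1) (h11 : 11 ≤ Fintype.card F) :
    {q : ℕ | q.Prime ∧ ∃ k : F, k ≠ 0 ∧ #(mordellPoints k) + 1 = q}.encard ≤ 2 := by
  have h6 : 6 ∣ Fintype.card F - 1 := by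
    have := FiniteField.odd_card_of_char_ne_two hF
    omega
  refine Set.encard_le_two_of_forall_eq_or_eq_or_eq ?_
  rintro _ ⟨ha, a, ha0, rfl⟩ _ ⟨hb, b, hb0, rfl⟩ _ ⟨hc, c, hc0, rfl⟩
  simp only [add_left_inj]
  rcases eq_or_eq_or_eq_of_sq_sub_self_add_one_eq_zero
    (sexticSymbol_sq_sub_self_add_one_of_prime hF h3 h11 ha0 ha)
    (sexticSymbol_sq_sub_self_add_one_of_prime hF h3 h11 hb0 hb)
    (sexticSymbol_sq_sub_self_add_one_of_prime hF h3 h11 hc0 hc) with h | h | h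
  · exact .inl (card_mordellPoints_eq_of_sexticSymbol_eq h6 ha0 hb0 h)
  · exact .inr (.inl (card_mordellPoints_eq_of_sexticSymbol_eq h6 ha0 hc0 h))
  · exact .inr (.inr (card_mordellPoints_eq_of_sexticSymbol_eq h6 hb0 hc0 h))

lemma not_prime_card_mordellPoints_add_one (hF : ringChar F ≠ 2) (h3 : Fintype.card F % 3 = 2)
    (k : F) : ¬(#(mordellPoints k) + 1).Prime := fun hq => by
  have := FiniteField.odd_card_of_char_ne_two hF
  rw [card_mordellPoints_of_card_mod_three_eq_two h3] at hq
  rcases hq.eq_one_or_self_of_dvd 2 (by omega) with h | h <;> omega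

end FiniteField

lemma Npts_eq_card_mordellPoints_add_one {p : ℕ} [Fact p.Prime] (hp : 3 < p) {k : ZMod p}
    (hk : k ≠ 0) : Npts p k = #(mordellPoints k) + 1 := by
  refine natCard_point_mordell (fun h => ?_) hk
  have hdvd : p ∣ 2 * 3 := (ZMod.natCast_eq_zero_iff 6 p).mp (by exact_mod_cast h)
  rcases (Nat.Prime.dvd_mul Fact.out).mp hdvd with hd | hd <;>
    have := Nat.le_of_dvd (by norm_num) hd <;> omega

/-- Corollary 2.6: for a prime `p > 7`, the set of primes `q` arising as the number of points of
some curve `y² = x³ + k` (`k ≠ 0`) over `F_p` has at most two elements, and every such prime `q`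
satisfies `q ≡ 1 (mod 3)`. -/
theorem stmt_4 (p : ℕ) (hp : p.Prime) (hp7 : 7 < p) :
    {q : ℕ | q.Prime ∧ ∃ k : ZMod p, k ≠ 0 ∧ Npts p k = q}.encard ≤ 2 ∧
      ∀ q ∈ {q : ℕ | q.Prime ∧ ∃ k : ZMod p, k ≠ 0 ∧ Npts p k = q}, q % 3 = 1 := by
  have := Fact.mk hp
  have hF : ringChar (ZMod p) ≠ 2 := by rw [ZMod.ringChar_zmod_n]; omega
  have h11 : 11 ≤ Fintype.card (ZMod p) := by
    rw [ZMod.card]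
    by_contra!
    interval_cases p <;> norm_num at hp
  have h3 : Fintype.card (ZMod p) % 3 = 1 ∨ Fintype.card (ZMod p) % 3 = 2 := by
    have := hp.eq_one_or_self_of_dvd 3
    rw [ZMod.card]
    omega
  have hS : {q : ℕ | q.Prime ∧ ∃ k : ZMod p, k ≠ 0 ∧ Npts p k = q} =
      {q : ℕ | q.Prime ∧ ∃ k : ZMod p, k ≠ 0 ∧ #(mordellPoints k) + 1 = q} := by
    ext q
    refine and_congr_right fun _ => exists_congr fun k => and_congr_right fun hk => ?_
    rw [Npts_eq_card_mordellPoints_add_one (by omega) hk]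
  rw [hS]
  rcases h3 with h3 | h3
  · refine ⟨encard_setOf_prime_card_mordellPoints_add_one_le_two hF h3 h11, ?_⟩
    rintro _ ⟨hq, k, hk, rfl⟩
    exact card_mordellPoints_add_one_mod_three_of_prime hF h3 h11 hk hq
  · have hempty : {q : ℕ | q.Prime ∧ ∃ k : ZMod p, k ≠ 0 ∧ #(mordellPoints k) + 1 = q} = ∅ :=
      Set.eq_empty_of_forall_notMem fun _ ⟨hq, k, _, hkq⟩ =>
        not_prime_card_mordellPoints_add_one hF h3 k (hkq ▸ hq)
    simp [hempty]
end

section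
/- Let d be a squarefree positive integer with d ≠ 3, let n ≥ 3, and let p₁, …, p_n be pairwise distinct primes greater than 3. Then it is impossible that for every i (indices taken cyclically modulo n) there exist positive integers a_i, b_i with 4p_i = a_i² + d·b_i² and (p_{i+1} = p_i + 1 + a_i or p_{i+1} = p_i + 1 − a_i). -/
private lemma cancel_sq {x y : ℤ} (hx : 0 < x) (hy : 0 < y) (h : x^2 = y^2) : x = y := by
  rcases mul_eq_zero.mp (show (x - y) * (x + y) = 0 by linear_combination h) with h' | h' <;>
    linarith

private lemma uniq (d q a b a' b' : ℤ) (hd7 : 7 ≤ d)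
    (hq : Prime q) (hqpos : 0 < q) (hqodd : Odd q)
    (ha : 0 < a) (hb : 0 < b) (ha' : 0 < a') (hb' : 0 < b')
    (hao : Odd a) (hbo : Odd b) (hao' : Odd a') (hbo' : Odd b')
    (h1 : 4*q = a^2 + d*b^2) (h2 : 4*q = a'^2 + d*b'^2) : a = a' ∧ b = b' := by
  have hq0 : q ≠ 0 := ne_of_gt hqpos
  have key : q ∣ (a*b' - a'*b) * (a*b' + a'*b) :=
    ⟨4*(b'^2 - b^2), by linear_combination b^2 * h2 - b'^2 * h1⟩
  have habz : a*b' = a'*b := by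
    rcases hq.dvd_mul.mp key with h | h
    · obtain ⟨u, hu⟩ := h
      have hue : Even (q*u) := by
        rw [← hu]; exact (hao.mul hbo').sub_odd (hao'.mul hbo)
      have hue' : Even u := by
        rcases Int.even_mul.mp hue with h' | h'
        · exact absurd h' (Int.not_even_iff_odd.mpr hqodd)
        · exact h'
      obtain ⟨t, ht⟩ := hue'
      have h16 : 16*q^2 = (a*a'+d*b*b')^2 + d*(q*u)^2 := by
        rw [← hu]; linear_combination (4*q)*h2 + (a'^2 + d*b'^2)*h1
      have hdvd : q ∣ (a*a'+d*b*b')^2 := ⟨q*(16 - d*u^2), by linear_combination -h16⟩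
      obtain ⟨v, hv⟩ := hq.dvd_of_dvd_pow hdvd
      have h16' : (16 : ℤ) = v^2 + d*u^2 := by
        have hq2 : (q^2 : ℤ) ≠ 0 := pow_ne_zero _ hq0
        have hh : q^2 * 16 = q^2 * (v^2 + d*u^2) := by
          linear_combination h16 + (a*a'+d*b*b' + q*v) * hv
        exact mul_left_cancel₀ hq2 hh
      have h16'' : (16:ℤ) = v^2 + 4*d*t^2 := by
        rw [ht] at h16'; linear_combination h16'
      have ht0 : t = 0 := by
        by_contra h0
        have h1t : 1 ≤ t^2 := by nlinarith [Int.one_le_abs h0, sq_abs t]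
        have : 7 ≤ d * t^2 := by nlinarith
        nlinarith [sq_nonneg v]
      rw [ht0] at ht; rw [ht] at hu; linear_combination hu
    · obtain ⟨u, hu⟩ := h
      exfalso
      have hue : Even (q*u) := by
        rw [← hu]; exact (hao.mul hbo').add_odd (hao'.mul hbo)
      have hue' : Even u := by
        rcases Int.even_mul.mp hue with h' | h'
        · exact absurd h' (Int.not_even_iff_odd.mpr hqodd)
        · exact h'
      obtain ⟨t, ht⟩ := hue'
      have hupos : 0 < u := by
        by_contra h0
        push_neg at h0
        nlinarith [mul_pos ha hb', mul_pos ha' hb]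
      have ht1 : 1 ≤ t := by omega
      have h16 : 16*q^2 = (a*a'-d*b*b')^2 + d*(q*u)^2 := by
        rw [← hu]; linear_combination (4*q)*h2 + (a'^2 + d*b'^2)*h1
      have h16' : 16*q^2 = (a*a'-d*b*b')^2 + 4*d*t^2*q^2 := by
        rw [ht] at h16; linear_combination h16
      have ht2 : (1:ℤ) ≤ t^2 := by nlinarith
      have h7 : (7:ℤ) ≤ d * t^2 := by nlinarith
      have hq1 : (1:ℤ) ≤ q^2 := by nlinarith
      have : 7 * q^2 ≤ d * t^2 * q^2 := by nlinarith [sq_nonneg q]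
      nlinarith [sq_nonneg (a*a'-d*b*b')]
  have hb2 : b^2 = b'^2 := by
    have h4 : (4*q) * (b'^2 - b^2) = 0 := by
      linear_combination b'^2*h1 - b^2*h2 + (a*b' + a'*b)*habz
    have h40 : (4*q : ℤ) ≠ 0 := by positivity
    have := (mul_eq_zero.mp h4).resolve_left h40
    linarith
  have hbb : b = b' := cancel_sq hb hb' hb2
  have ha2 : a^2 = a'^2 := by linear_combination -h1 + h2 - d*(b+b')*hbb
  exact ⟨cancel_sq ha ha' ha2, hbb⟩

/-- Theorem 3.3 (`d ≠ 3` part): there are no proper elliptic `n`-cycles over a squarefree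
`d ≠ 3` for `n ≥ 3`. -/
theorem stmt_10 (d : ℕ) (hd : Squarefree d) (hdpos : 0 < d) (hd3 : d ≠ 3)
    (n : ℕ) (hn : 3 ≤ n) (p : ℕ → ℕ)
    (hinj : ∀ i < n, ∀ j < n, p i = p j → i = j)
    (hprime : ∀ i < n, (p i).Prime) (h3 : ∀ i < n, 3 < p i) :
    ¬ ∀ i < n, ∃ a b : ℤ, 0 < a ∧ 0 < b ∧ (4 * p i : ℤ) = a ^ 2 + d * b ^ 2 ∧
        ((p ((i + 1) % n) : ℤ) = p i + 1 + a ∨ (p ((i + 1) % n) : ℤ) = p i + 1 - a) := by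
  intro H
  obtain ⟨A, B, hA⟩ : ∃ A B : ℕ → ℤ, ∀ i < n, 0 < A i ∧ 0 < B i ∧
      (4 * p i : ℤ) = A i ^ 2 + d * B i ^ 2 ∧
      ((p ((i + 1) % n) : ℤ) = p i + 1 + A i ∨ (p ((i + 1) % n) : ℤ) = p i + 1 - A i) := by
    choose f g h1 h2 h3' h4 using H
    refine ⟨fun i => if h : i < n then f i h else 0,
            fun i => if h : i < n then g i h else 0, fun i hi => ?_⟩
    simp only [dif_pos hi]
    exact ⟨h1 i hi, h2 i hi, h3' i hi, h4 i hi⟩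
  have hnpos : 0 < n := by omega
  have hpodd : ∀ i < n, Odd ((p i : ℤ)) := fun i hi => by
    rw [Int.odd_coe_nat]
    exact (hprime i hi).odd_of_ne_two (by have := h3 i hi; omega)
  -- A i is odd
  have hAodd : ∀ i < n, Odd (A i) := by
    intro i hi
    have hj : (i+1) % n < n := Nat.mod_lt _ hnpos
    obtain ⟨_, _, _, hsign⟩ := hA i hi
    have hpi := hpodd i hi
    have hpj := hpodd _ hj
    rcases hsign with hs | hs
    · have : A i = ((p ((i+1)%n) : ℤ) - (p i : ℤ)) - 1 := by linarith
      rw [this]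
      exact (hpj.sub_odd hpi).sub_odd odd_one
    · have : A i = ((p i : ℤ) - (p ((i+1)%n) : ℤ)) + 1 := by linarith
      rw [this]
      exact (hpi.sub_odd hpj).add_odd odd_one
  -- B i is odd, d odd
  have hdBodd : ∀ i < n, Odd ((d:ℤ) * (B i)^2) := by
    intro i hi
    obtain ⟨_, _, hrep, _⟩ := hA i hi
    have h4e : Even ((4:ℤ) * p i) := ⟨2 * p i, by ring⟩
    have : (d:ℤ) * (B i)^2 = 4 * p i - (A i)^2 := by linarith
    rw [this]
    exact h4e.sub_odd ((hAodd i hi).pow)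
  have hBodd : ∀ i < n, Odd (B i) := by
    intro i hi
    rcases Int.even_or_odd (B i) with he | ho
    · exfalso
      have hsq : Even ((B i)^2) := by rw [sq]; exact he.mul_right _
      have : Even ((d:ℤ) * (B i)^2) := hsq.mul_left _
      exact (Int.not_even_iff_odd.mpr (hdBodd i hi)) this
    · exact ho
  have hdodd : Odd ((d:ℤ)) := by
    rcases(Int.odd_mul.mp (hdBodd 0 hnpos)) with ⟨h1, _⟩
    exact h1
  have hd7 : (7:ℤ) ≤ (d:ℤ) := by
    obtain ⟨_, _, hrep0, _⟩ := hA 0 hnpos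
    obtain ⟨k, hk⟩ := hAodd 0 hnpos
    obtain ⟨m, hm⟩ := hBodd 0 hnpos
    have hc : (d:ℤ) = 4*((p 0:ℤ) - k^2 - k - d*(m^2+m)) - 1 := by
      rw [hk, hm] at hrep0; linear_combination -hrep0
    have : (3:ℤ) ≠ (d:ℤ) := by exact_mod_cast fun h => hd3 (by exact_mod_cast h.symm)
    omega
  -- the step lemma
  have hstep : ∀ i < n, B ((i+1) % n) = B i ∧
      (A ((i+1) % n) = A i + 2 ∨ A ((i+1) % n) = A i - 2) := by
    intro i hi
    have hj : (i+1) % n < n := Nat.mod_lt _ hnpos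
    obtain ⟨hApi, hBpi, hrepi, hsigni⟩ := hA i hi
    obtain ⟨hApj, hBpj, hrepj, _⟩ := hA _ hj
    have hqprime : Prime ((p ((i+1)%n) : ℤ)) := Nat.prime_iff_prime_int.mp (hprime _ hj)
    have hqpos : (0:ℤ) < (p ((i+1)%n) : ℤ) := by exact_mod_cast (hprime _ hj).pos
    have hqodd := hpodd _ hj
    rcases hsigni with hs | hs
    · have hrep2 : (4 * p ((i+1)%n) : ℤ) = (A i + 2)^2 + d * (B i)^2 := by
        linear_combination 4*hs + hrepi
      obtain ⟨hA', hB'⟩ := uniq d (p ((i+1)%n)) (A ((i+1)%n)) (B ((i+1)%n)) (A i + 2) (B i)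
        hd7 hqprime hqpos hqodd hApj hBpj (by linarith) hBpi
        (hAodd _ hj) (hBodd _ hj) ((hAodd i hi).add_even even_two) (hBodd i hi)
        hrepj hrep2
      exact ⟨hB', Or.inl hA'⟩
    · by_cases h1a : A i = 1
      · exfalso
        have hpji : (p ((i+1)%n) : ℤ) = (p i : ℤ) := by rw [hs, h1a]; ring
        have hji : (i+1) % n = i := hinj _ hj i hi (by exact_mod_cast hpji)
        rcases Nat.lt_or_ge (i+1) n with h' | h'
        · rw [Nat.mod_eq_of_lt h'] at hji; omega
        · have hin : i + 1 = n := by omega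
          rw [hin, Nat.mod_self] at hji; omega
      · have hAi3 : 3 ≤ A i := by
          obtain ⟨k, hk⟩ := hAodd i hi; omega
        have hrep2 : (4 * p ((i+1)%n) : ℤ) = (A i - 2)^2 + d * (B i)^2 := by
          linear_combination 4*hs + hrepi
        obtain ⟨hA', hB'⟩ := uniq d (p ((i+1)%n)) (A ((i+1)%n)) (B ((i+1)%n)) (A i - 2) (B i)
          hd7 hqprime hqpos hqodd hApj hBpj (by linarith) hBpi
          (hAodd _ hj) (hBodd _ hj) ((hAodd i hi).sub_even even_two) (hBodd i hi)
          hrepj hrep2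
        exact ⟨hB', Or.inr hA'⟩
  -- B is constant
  have hB0 : ∀ k : ℕ, B (k % n) = B 0 := by
    intro k
    induction k with
    | zero => rw [Nat.zero_mod]
    | succ k ih =>
      rw [← Nat.mod_add_mod]
      rw [(hstep (k % n) (Nat.mod_lt _ hnpos)).1, ih]
  have hBc : ∀ i < n, B i = B 0 := by
    intro i hi
    have := hB0 i
    rwa [Nat.mod_eq_of_lt hi] at this
  -- A is injective on [0, n)
  have hAinj : ∀ i < n, ∀ j < n, A i = A j → i = j := by
    intro i hi j hj hij
    obtain ⟨_, _, hrI, _⟩ := hA i hi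
    obtain ⟨_, _, hrJ, _⟩ := hA j hj
    have h4 : (4 * p i : ℤ) = 4 * p j := by
      rw [hrI, hrJ, hij, hBc i hi, hBc j hj]
    have : (p i : ℤ) = (p j : ℤ) := by linarith
    exact hinj i hi j hj (by exact_mod_cast this)
  -- take the max
  obtain ⟨M, hM, hmax⟩ := Finset.exists_max_image (Finset.range n) A
    ⟨0, Finset.mem_range.mpr hnpos⟩
  have hMn : M < n := Finset.mem_range.mp hM
  have hjn : (M+1) % n < n := Nat.mod_lt _ hnpos
  have hjle : A ((M+1) % n) ≤ A M := hmax _ (Finset.mem_range.mpr hjn)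
  have hAj : A ((M+1) % n) = A M - 2 := by
    rcases (hstep M hMn).2 with h | h
    · omega
    · exact h
  -- predecessor
  have hin : (M + (n-1)) % n < n := Nat.mod_lt _ hnpos
  have hiM : ((M + (n-1)) % n + 1) % n = M := by
    rw [Nat.mod_add_mod]
    have h1 : M + (n-1) + 1 = M + n := by omega
    rw [h1, Nat.add_mod_right, Nat.mod_eq_of_lt hMn]
  have hprev := hstep ((M + (n-1)) % n) hin
  rw [hiM] at hprev
  have hile : A ((M + (n-1)) % n) ≤ A M := hmax _ (Finset.mem_range.mpr hin)
  have hAi : A ((M + (n-1)) % n) = A M - 2 := by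
    rcases hprev.2 with h | h <;> omega
  have hij : (M + (n-1)) % n = (M+1) % n := hAinj _ hin _ hjn (by omega)
  have hfin : ((M+1) % n + 1) % n = M := by rw [← hij]; exact hiM
  rw [Nat.mod_add_mod] at hfin
  rcases Nat.lt_or_ge (M+1+1) n with h' | h'
  · rw [Nat.mod_eq_of_lt h'] at hfin; omega
  · have h2n : M + 1 + 1 - n < n := by omega
    rw [Nat.mod_eq_sub_mod h', Nat.mod_eq_of_lt h2n] at hfin
    omega
end

section
/- Let d be a squarefree positive integer with d ≠ 3, let n ≥ 1, let p₁ < p₂ < … < p_n be primes greater than 3, and let a₁, …, a_n and b₁, …, b_n be positive integers such that 4p_i = a_i² + d·b_i² for each i, and such that p_{i+1} = p_i + 1 + a_i and p_i = p_{i+1} + 1 − a_{i+1} for each i = 1, …, n−1. Then a_i = a₁ + 2(i − 1) and b_i = b₁ for every i = 1, …, n. -/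
/-- Theorem 4.1 (arithmetic form): for an ascending proper elliptic list `(p₁, …, p_n)` over a
squarefree `d ≠ 3`, with `4pᵢ = aᵢ² + d·bᵢ²` (`aᵢ, bᵢ` positive), `p_{i+1} = pᵢ + 1 + aᵢ` and
`pᵢ = p_{i+1} + 1 − a_{i+1}`, we have `aᵢ = a₁ + 2(i − 1)` and `bᵢ = b₁` (here indexed from 0).
-/
theorem stmt_15 (d : ℕ) (hd : Squarefree d) (hdpos : 0 < d) (hd3 : d ≠ 3)
    (n : ℕ) (hn : 1 ≤ n) (p : ℕ → ℕ) (a b : ℕ → ℤ)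
    (hprime : ∀ i < n, (p i).Prime) (h3 : ∀ i < n, 3 < p i)
    (hmono : ∀ i, i + 1 < n → p i < p (i + 1))
    (hpos : ∀ i < n, 0 < a i ∧ 0 < b i)
    (hab : ∀ i < n, (4 * p i : ℤ) = (a i) ^ 2 + d * (b i) ^ 2)
    (hup : ∀ i, i + 1 < n → (p (i + 1) : ℤ) = p i + 1 + a i)
    (hdown : ∀ i, i + 1 < n → (p i : ℤ) = p (i + 1) + 1 - a (i + 1)) :
    ∀ i < n, a i = a 0 + 2 * i ∧ b i = b 0 := by
  intro i hi
  induction i with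
  | zero => simp
  | succ k ih =>
    have hk : k < n := Nat.lt_of_succ_lt hi
    obtain ⟨hak, hbk⟩ := ih hk
    have h1 := hup k hi
    have h2 := hdown k hi
    have ha : a (k + 1) = a k + 2 := by omega
    have e1 := hab k hk
    have e2 := hab (k + 1) hi
    have hdb : (d : ℤ) * (b (k + 1)) ^ 2 = (d : ℤ) * (b k) ^ 2 := by nlinarith
    have hbsq : (b (k + 1)) ^ 2 = (b k) ^ 2 := by
      have hd0 : (d : ℤ) ≠ 0 := by positivity
      exact mul_left_cancel₀ hd0 hdb
    have hb1 := (hpos k hk).2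
    have hb2 := (hpos (k + 1) hi).2
    have hb : b (k + 1) = b k := by nlinarith [sq_nonneg (b (k + 1) - b k)]
    constructor
    · push_cast
      omega
    · rw [hb, hbk]
end

section
/- Let d be a squarefree positive integer with d ≠ 3, let n ≥ 1, let p₁ < p₂ < … < p_n be primes greater than 3, and let a₁, …, a_n and b₁, …, b_n be positive integers such that 4p_i = a_i² + d·b_i² for each i, and such that p_{i+1} = p_i + 1 + a_i and p_i = p_{i+1} + 1 − a_{i+1} for each i = 1, …, n−1. Then for every integer x with 0 ≤ x ≤ n − 1, the number x² + a₁·x + p₁ is prime (indeed it equals p_{x+1}). -/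
/-- Theorem 4.2: if a prime `p₁` with `4p₁ = a² + d·b²` is the initial term of an ascending
proper elliptic list of length `n` over a squarefree `d ≠ 3`, then `x² + a·x + p₁` is prime for
`x = 0, 1, …, n − 1` (indeed it equals `p_{x+1}`; lists here are indexed from 0). -/
theorem stmt_16 (d : ℕ) (hd : Squarefree d) (hdpos : 0 < d) (hd3 : d ≠ 3)
    (n : ℕ) (hn : 1 ≤ n) (p : ℕ → ℕ) (a b : ℕ → ℤ)
    (hprime : ∀ i < n, (p i).Prime) (h3 : ∀ i < n, 3 < p i)
    (hmono : ∀ i, i + 1 < n → p i < p (i + 1))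
    (hpos : ∀ i < n, 0 < a i ∧ 0 < b i)
    (hab : ∀ i < n, (4 * p i : ℤ) = (a i) ^ 2 + d * (b i) ^ 2)
    (hup : ∀ i, i + 1 < n → (p (i + 1) : ℤ) = p i + 1 + a i)
    (hdown : ∀ i, i + 1 < n → (p i : ℤ) = p (i + 1) + 1 - a (i + 1)) :
    ∀ x : ℕ, x ≤ n - 1 →
      Prime ((x : ℤ) ^ 2 + a 0 * x + p 0) ∧ (x : ℤ) ^ 2 + a 0 * x + p 0 = p x := by
  have key : ∀ x, x < n → ((p x : ℤ) = (x : ℤ) ^ 2 + a 0 * x + p 0 ∧ a x = a 0 + 2 * x) := by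
    intro x
    induction x with
    | zero => intro _; constructor <;> push_cast <;> ring
    | succ k ih =>
      intro hk
      obtain ⟨hp, ha⟩ := ih (Nat.lt_of_succ_lt hk)
      have h1 := hup k hk
      have h2 := hdown k hk
      constructor
      · rw [h1, hp, ha]; push_cast; ring
      · have : a (k + 1) = (p (k+1) : ℤ) + 1 - p k := by linarith
        rw [this, h1, ha]; push_cast; ring
  intro x hx
  have hxn : x < n := by omega
  obtain ⟨hp, _⟩ := key x hxn
  refine ⟨?_, hp.symm⟩
  rw [← hp]
  exact Nat.prime_iff_prime_int.mp (hprime x hxn)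
end

section
/- Let d be a squarefree positive integer with d ≡ 3 (mod 8) and d ≠ 3, and let z be the smallest odd prime such that the Legendre symbol (−d / z) is not equal to −1 (i.e., z divides d or −d is a nonzero square modulo z). Then there do not exist positive integers a and b with 4 dividing a² + d·b² such that the number ((a + 2i)² + d·b²)/4 is prime for every i = 0, 1, …, z − 1. Equivalently, there is no proper elliptic list over d of length n ≥ z. -/
/-!
As `i` runs over `0, …, z - 1`, the numbers `a + 2i` run over all residues modulo the odd
prime `z`. Since `(−d / z) ≠ −1`, the congruence `X² + d·b² ≡ 0 (mod z)` has a root `r`, so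
some `c = a + 2i ≡ r` has `z ∣ c² + d·b²`; as `(c² + d·b²)/4` is prime, `c² + d·b² = 4z`. This
equation determines `c`, so the roots `r` and `−r` coincide, i.e. `r = 0`: then `z` divides both
`c` and `d·b²`, and `c² + d·b² = 4z` forces `z = 3`, `c = 3` and `d·b² = 3`, i.e. `d = 3`.
-/

theorem ZMod.exists_lt_natCast_add_two_mul_eq {n : ℕ} [NeZero n] (hn : Odd n) (a : ℕ)
    (r : ZMod n) : ∃ i < n, ((a + 2 * i : ℕ) : ZMod n) = r := by
  refine ⟨((r - a) * (2 : ZMod n)⁻¹).val, ZMod.val_lt _, ?_⟩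
  have h2 : (2 : ZMod n) * (2 : ZMod n)⁻¹ = 1 :=
    mod_cast ZMod.coe_mul_inv_eq_one 2 (Nat.coprime_two_left.mpr hn)
  push_cast [ZMod.natCast_val, ZMod.cast_id]
  linear_combination (r - a) * h2

theorem Nat.eq_four_mul_of_prime_div_four {N p : ℕ} (h4 : 4 ∣ N) (hN : (N / 4).Prime)
    (hp : p.Prime) (hp2 : p ≠ 2) (hpN : p ∣ N) : N = 4 * p := by
  obtain ⟨q, rfl⟩ := h4
  rw [Nat.mul_div_cancel_left q (by norm_num)] at hN
  have hp4 : p.Coprime 4 := ((Nat.coprime_primes hp Nat.prime_two).mpr hp2).pow_right 2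
  rw [(Nat.prime_dvd_prime_iff_eq hp hN).mp (hp4.dvd_of_dvd_mul_left hpN)]

theorem four_dvd_add_two_mul_sq_add {a D : ℕ} (i : ℕ) (h : 4 ∣ a ^ 2 + D) :
    4 ∣ (a + 2 * i) ^ 2 + D := by
  have : (a + 2 * i) ^ 2 + D = a ^ 2 + D + 4 * (a * i + i ^ 2) := by ring
  exact this ▸ h.add (dvd_mul_right 4 _)

theorem eq_three_of_sq_add_eq_four_mul {c D p : ℕ} (hp : p.Prime) (hodd : Odd p) (hc0 : 0 < c)
    (hc : p ∣ c) (hD : p ∣ D) (h : c ^ 2 + D = 4 * p) : D = 3 := by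
  obtain ⟨k, rfl⟩ := hc
  obtain ⟨m, rfl⟩ := hD
  have hkm : p * k ^ 2 + m = 4 :=
    Nat.eq_of_mul_eq_mul_left hp.pos (by rw [← mul_comm 4, ← h]; ring)
  obtain ⟨t, rfl⟩ := hodd
  have ht : 1 ≤ t := by have := hp.two_le; omega
  have hk : k = 1 := by
    have : 0 < k := Nat.pos_of_mul_pos_left hc0
    nlinarith
  subst hk
  obtain ⟨rfl, rfl⟩ : t = 1 ∧ m = 1 := by omega
  rfl

section EllipticList

variable {a D p : ℕ} (hp : p.Prime) (hodd : Odd p) (h4 : 4 ∣ a ^ 2 + D)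
  (hprime : ∀ i < p, (((a + 2 * i) ^ 2 + D) / 4).Prime)
include hp hodd h4 hprime

theorem exists_natCast_eq_and_sq_add_eq_four_mul {r : ZMod p} (hr : r ^ 2 + D = 0) :
    ∃ i < p, ((a + 2 * i : ℕ) : ZMod p) = r ∧ (a + 2 * i) ^ 2 + D = 4 * p := by
  have : NeZero p := ⟨hp.ne_zero⟩
  obtain ⟨i, hi, hir⟩ := ZMod.exists_lt_natCast_add_two_mul_eq hodd a r
  refine ⟨i, hi, hir, Nat.eq_four_mul_of_prime_div_four (four_dvd_add_two_mul_sq_add i h4)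
    (hprime i hi) hp (by rintro rfl; exact Nat.not_odd_iff_even.mpr even_two hodd) ?_⟩
  rw [← ZMod.natCast_eq_zero_iff, Nat.cast_add, Nat.cast_pow, hir, hr]

theorem eq_of_sq_add_eq_zero {r s : ZMod p} (hr : r ^ 2 + D = 0) (hs : s ^ 2 + D = 0) :
    r = s := by
  obtain ⟨i, -, rfl, hi⟩ := exists_natCast_eq_and_sq_add_eq_four_mul hp hodd h4 hprime hr
  obtain ⟨j, -, rfl, hj⟩ := exists_natCast_eq_and_sq_add_eq_four_mul hp hodd h4 hprime hs
  rw [Nat.pow_left_injective two_ne_zero (Nat.add_right_cancel (hi.trans hj.symm))]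

end EllipticList

theorem stmt_17_general (d : ℕ) (hd3 : d ≠ 3)
    (z : ℕ) (hz : z.Prime) (hzodd : Odd z)
    (hzsym : @legendreSym z ⟨hz⟩ (-(d : ℤ)) ≠ -1) :
    ¬ ∃ a b : ℕ, 0 < a ∧ 0 < b ∧ 4 ∣ a ^ 2 + d * b ^ 2 ∧
        ∀ i < z, (((a + 2 * i) ^ 2 + d * b ^ 2) / 4).Prime := by
  rintro ⟨a, b, ha, -, h4, hprime⟩
  have : Fact z.Prime := ⟨hz⟩
  obtain ⟨x, hx⟩ : IsSquare ((-d : ℤ) : ZMod z) := by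
    simpa [legendreSym.eq_neg_one_iff] using hzsym
  have hroot : ∀ s : ZMod z, s ^ 2 = (x * b) ^ 2 → s ^ 2 + ((d * b ^ 2 : ℕ) : ZMod z) = 0 := by
    rintro s hs
    push_cast at hx ⊢
    linear_combination hs - (b : ZMod z) ^ 2 * hx
  have hxb : x * b = 0 := by
    have := eq_of_sq_add_eq_zero hz hzodd h4 hprime (hroot _ (neg_sq _)) (hroot _ rfl)
    refine ((ZMod.neg_eq_self_iff _).mp this).resolve_right ?_
    obtain ⟨t, rfl⟩ := hzodd
    omega
  obtain ⟨i, -, hi, hsum⟩ := exists_natCast_eq_and_sq_add_eq_four_mul hz hzodd h4 hprime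
    (hroot _ rfl)
  rw [hxb, ZMod.natCast_eq_zero_iff] at hi
  have hD : z ∣ d * b ^ 2 :=
    (ZMod.natCast_eq_zero_iff _ _).mp (by simpa [hxb] using hroot _ rfl)
  have hdb : d * b ^ 2 = 3 := eq_three_of_sq_add_eq_four_mul hz hzodd (by omega) hi hD hsum
  have hb : b = 1 := by
    have : b ^ 2 ∣ 3 := Dvd.intro_left d hdb
    have : b ≤ 1 := by nlinarith [Nat.le_of_dvd (by norm_num) this]
    interval_cases b <;> simp_all
  exact hd3 (by simpa [hb] using hdb)

/-- Theorem 4.3: let `d ≡ 3 (mod 8)` be squarefree with `d ≠ 3`, and let `z` be the smallest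
odd prime with Legendre symbol `(−d / z) ≠ −1`. Then there is no proper elliptic list over `d`
of length `≥ z`, i.e. there are no positive integers `a, b` with `4 ∣ a² + d·b²` such that
`((a + 2i)² + d·b²)/4` is prime for every `i = 0, …, z − 1`. -/
theorem stmt_17 (d : ℕ) (hd : Squarefree d) (hdpos : 0 < d) (hd8 : d % 8 = 3) (hd3 : d ≠ 3)
    (z : ℕ) (hz : z.Prime) (hzodd : Odd z)
    (hzsym : @legendreSym z ⟨hz⟩ (-(d : ℤ)) ≠ -1)
    (hzmin : ∀ z' : ℕ, (hz' : z'.Prime) → Odd z' →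
      @legendreSym z' ⟨hz'⟩ (-(d : ℤ)) ≠ -1 → z ≤ z') :
    ¬ ∃ a b : ℕ, 0 < a ∧ 0 < b ∧ 4 ∣ a ^ 2 + d * b ^ 2 ∧
        ∀ i < z, (((a + 2 * i) ^ 2 + d * b ^ 2) / 4).Prime :=
  stmt_17_general d hd3 z hz hzodd hzsym
end

section
/- Let d be a squarefree positive integer with d ≡ 3 (mod 8), d ≠ 3, and d ≢ 19 (mod 24). Then there do not exist positive integers a and b with 4 dividing a² + d·b² such that the three numbers (a² + d·b²)/4, ((a + 2)² + d·b²)/4, and ((a + 4)² + d·b²)/4 are all prime. Equivalently, there is no proper elliptic list of length n ≥ 3 over d. -/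
/-- Auxiliary: if `T ≡ 0 (mod 3)`, one of the three candidate primes is divisible by `3`. -/
lemma stmt_18_aux_single (A T a p0 p1 p2 : ℕ)
    (ha3 : (a % 3 = 0 ∧ A % 3 = 0) ∨ (a % 3 ≠ 0 ∧ A % 3 = 1))
    (hp0 : A + T = 4 * p0)
    (hp1 : 4 * p0 + 4 * (a + 1) = 4 * p1)
    (hp2 : 4 * p0 + 4 * (2 * a + 4) = 4 * p2)
    (hT0 : T % 3 = 0) :
    p0 % 3 = 0 ∨ p1 % 3 = 0 ∨ p2 % 3 = 0 := by
  have h3a : a % 3 = 0 ∨ a % 3 = 1 ∨ a % 3 = 2 := by omega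
  rcases h3a with h' | h' | h' <;> omega

/-- Auxiliary: if `T ≡ 2 (mod 3)`, two of the three candidate primes are divisible by `3`. -/
lemma stmt_18_aux_pair (A T a p0 p1 p2 : ℕ)
    (ha3 : (a % 3 = 0 ∧ A % 3 = 0) ∨ (a % 3 ≠ 0 ∧ A % 3 = 1))
    (hp0 : A + T = 4 * p0)
    (hp1 : 4 * p0 + 4 * (a + 1) = 4 * p1)
    (hp2 : 4 * p0 + 4 * (2 * a + 4) = 4 * p2)
    (hT2 : T % 3 = 2) :
    (p0 % 3 = 0 ∧ p1 % 3 = 0) ∨ (p0 % 3 = 0 ∧ p2 % 3 = 0) ∨ (p1 % 3 = 0 ∧ p2 % 3 = 0) := by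
  have h3a : a % 3 = 0 ∨ a % 3 = 1 ∨ a % 3 = 2 := by omega
  rcases h3a with h' | h' | h' <;> omega

/-- Corollary 4.4: if `d` is squarefree with `d ≡ 3 (mod 8)`, `d ≠ 3` and `d ≢ 19 (mod 24)`,
then there is no proper elliptic list of length `≥ 3` over `d`, i.e. there are no positive
integers `a, b` with `4 ∣ a² + d·b²` such that `(a² + d·b²)/4`, `((a+2)² + d·b²)/4` and
`((a+4)² + d·b²)/4` are all prime. -/
theorem stmt_18 (d : ℕ) (hd : Squarefree d) (hdpos : 0 < d) (hd8 : d % 8 = 3) (hd3 : d ≠ 3)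
    (hd24 : d % 24 ≠ 19) :
    ¬ ∃ a b : ℕ, 0 < a ∧ 0 < b ∧ 4 ∣ a ^ 2 + d * b ^ 2 ∧
        ((a ^ 2 + d * b ^ 2) / 4).Prime ∧
        (((a + 2) ^ 2 + d * b ^ 2) / 4).Prime ∧
        (((a + 4) ^ 2 + d * b ^ 2) / 4).Prime := by
  rintro ⟨a, b, ha, hb, hdvd, h0, h1, h2⟩
  have key : ∀ p : ℕ, p.Prime → p % 3 = 0 → p = 3 := fun p hp h =>
    ((Nat.prime_dvd_prime_iff_eq Nat.prime_three hp).mp (Nat.dvd_of_mod_eq_zero h)).symm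
  have hsq : ∀ n : ℕ, (n % 3 = 0 ∧ n ^ 2 % 3 = 0) ∨ (n % 3 ≠ 0 ∧ n ^ 2 % 3 = 1) := by
    intro n
    have h := Nat.pow_mod n 2 3
    have h3 : n % 3 = 0 ∨ n % 3 = 1 ∨ n % 3 = 2 := by omega
    rcases h3 with h' | h' | h' <;> rw [h'] at h <;> norm_num at h <;> simp [h, h']
  have ha3 := hsq a
  have hb3 := hsq b
  have hs1 : (a + 2) ^ 2 + d * b ^ 2 = (a ^ 2 + d * b ^ 2) + 4 * (a + 1) := by ring
  have hs2 : (a + 4) ^ 2 + d * b ^ 2 = (a ^ 2 + d * b ^ 2) + 4 * (2 * a + 4) := by ring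
  have hdvd1 : 4 ∣ (a + 2) ^ 2 + d * b ^ 2 := by rw [hs1]; exact hdvd.add ⟨a + 1, rfl⟩
  have hdvd2 : 4 ∣ (a + 4) ^ 2 + d * b ^ 2 := by rw [hs2]; exact hdvd.add ⟨2 * a + 4, rfl⟩
  obtain ⟨p0, hp0⟩ := hdvd
  obtain ⟨p1, hp1⟩ := hdvd1
  obtain ⟨p2, hp2⟩ := hdvd2
  rw [hp0, Nat.mul_div_cancel_left _ (by norm_num)] at h0
  rw [hp1, Nat.mul_div_cancel_left _ (by norm_num)] at h1
  rw [hp2, Nat.mul_div_cancel_left _ (by norm_num)] at h2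
  rw [hs1, hp0] at hp1
  rw [hs2, hp0] at hp2
  have hb1 : 1 ≤ b ^ 2 := Nat.one_le_pow _ _ hb
  have hd' : d % 24 = 3 ∨ d % 24 = 11 := by omega
  have hTmod := Nat.mul_mod d (b ^ 2) 3
  rcases hd' with hc | hc
  · -- d ≡ 3 (mod 24): 3 ∣ d, and d ≥ 27 since d ≠ 3 and d ≡ 3 (mod 8)
    have hTlb : 27 ≤ d * b ^ 2 :=
      le_trans (show 27 ≤ d by omega) (Nat.le_mul_of_pos_right d hb1)
    have hT0 : d * b ^ 2 % 3 = 0 := by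
      rw [hTmod, show d % 3 = 0 by omega]; simp
    rcases stmt_18_aux_single _ _ _ _ _ _ ha3 hp0 hp1 hp2 hT0 with h | h | h
    · have := key p0 h0 h; omega
    · have := key p1 h1 h; omega
    · have := key p2 h2 h; omega
  · -- d ≡ 11 (mod 24)
    rcases hb3 with ⟨hbm, hbsq⟩ | ⟨hbm, hbsq⟩
    · -- 3 ∣ b : then d*b² ≥ 99 and ≡ 0 mod 3
      have hb9 : 9 ≤ b ^ 2 := by nlinarith [show 3 ≤ b by omega]
      have hTlb : 99 ≤ d * b ^ 2 := by
        calc (99 : ℕ) = 11 * 9 := by norm_num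
        _ ≤ d * b ^ 2 := Nat.mul_le_mul (show 11 ≤ d by omega) hb9
      have hT0 : d * b ^ 2 % 3 = 0 := by rw [hTmod, hbsq]; simp
      rcases stmt_18_aux_single _ _ _ _ _ _ ha3 hp0 hp1 hp2 hT0 with h | h | h
      · have := key p0 h0 h; omega
      · have := key p1 h1 h; omega
      · have := key p2 h2 h; omega
    · -- 3 ∤ b : b² ≡ 1, d ≡ 2 (mod 3), so d*b² ≡ 2 (mod 3); two of the pᵢ are ≡ 0 (mod 3)
      have hT2 : d * b ^ 2 % 3 = 2 := by
        rw [hTmod, hbsq, show d % 3 = 2 by omega]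
      rcases stmt_18_aux_pair _ _ _ _ _ _ ha3 hp0 hp1 hp2 hT2 with ⟨hx, hy⟩ | ⟨hx, hy⟩ | ⟨hx, hy⟩
      · have e1 := key p0 h0 hx; have e2 := key p1 h1 hy; omega
      · have e1 := key p0 h0 hx; have e2 := key p2 h2 hy; omega
      · have e1 := key p1 h1 hx; have e2 := key p2 h2 hy; omega
end

section
/- Assume Bunyakovsky's conjecture for quadratic polynomials: for every polynomial f ∈ ℤ[X] of degree 2 with positive leading coefficient that is irreducible over ℤ and such that no prime m divides f(x) for all integers x, there are infinitely many natural numbers n with f(n) prime. Then for every squarefree positive integer d with d ≡ 3 (mod 8): if d = 3, the set of primes of the form 12b² − 6b + 1 with b an integer is infinite; and if d ≠ 3, the set of primes p for which there exists an integer b with 4p = 1 + d·b² is infinite. -/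
open Polynomial

/-- A quadratic integer polynomial, primitive with negative discriminant, is irreducible. -/
lemma quad_irred (A B C0 : ℤ) (hA : A ≠ 0) (hdisc : B ^ 2 - 4 * A * C0 < 0)
    (hprim : (C A * X ^ 2 + C B * X + C C0 : ℤ[X]).IsPrimitive) :
    Irreducible (C A * X ^ 2 + C B * X + C C0 : ℤ[X]) := by
  rw [Polynomial.IsPrimitive.Int.irreducible_iff_irreducible_map_cast hprim]
  have hmap : (C A * X ^ 2 + C B * X + C C0 : ℤ[X]).map (Int.castRingHom ℚ)
      = C (A : ℚ) * X ^ 2 + C (B : ℚ) * X + C (C0 : ℚ) := by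
    simp [Polynomial.map_add, Polynomial.map_mul, Polynomial.map_pow]
  rw [hmap]
  have hA' : (A : ℚ) ≠ 0 := Int.cast_ne_zero.mpr hA
  have hdeg : (C (A : ℚ) * X ^ 2 + C (B : ℚ) * X + C (C0 : ℚ)).natDegree = 2 :=
    natDegree_quadratic hA'
  rw [irreducible_iff_roots_eq_zero_of_degree_le_three (by omega) (by omega)]
  apply Multiset.eq_zero_of_forall_notMem
  intro r hr
  have hne : (C (A : ℚ) * X ^ 2 + C (B : ℚ) * X + C (C0 : ℚ)) ≠ 0 := by
    intro h; rw [h] at hdeg; simp at hdeg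
  have hroot := (mem_roots hne).mp hr
  have heval : (A : ℚ) * r ^ 2 + (B : ℚ) * r + (C0 : ℚ) = 0 := by
    have := hroot
    simpa [IsRoot, eval_add, eval_mul, eval_pow] using this
  have key : (2 * (A:ℚ) * r + B) ^ 2 = (B:ℚ) ^ 2 - 4 * A * C0 := by
    have h4 : 4 * (A:ℚ) * ((A : ℚ) * r ^ 2 + (B : ℚ) * r + (C0 : ℚ)) = 0 := by
      rw [heval]; ring
    nlinarith [h4]
  have : ((B:ℚ) ^ 2 - 4 * A * C0 : ℚ) < 0 := by
    have : ((B ^ 2 - 4 * A * C0 : ℤ) : ℚ) < 0 := by exact_mod_cast hdisc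
    push_cast at this; linarith
  nlinarith [sq_nonneg (2 * (A:ℚ) * r + (B:ℚ))]

/-- From an infinite set of `n` with `f.eval n` prime, strictly monotone values,
we get infinitely many primes in the target set. -/
lemma infinite_primes_of_poly (f : ℤ[X]) (hmono : StrictMono fun n : ℕ => f.eval (n : ℤ))
    (hpos : ∀ n : ℕ, 0 < f.eval (n : ℤ))
    (hS : {n : ℕ | Prime (f.eval (n : ℤ))}.Infinite)
    (T : Set ℕ) (hT : ∀ n : ℕ, Prime (f.eval (n : ℤ)) → (f.eval (n : ℤ)).toNat ∈ T) :
    T.Infinite := by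
  have hinj : Function.Injective fun n : ℕ => (f.eval (n : ℤ)).toNat := by
    intro a b hab
    have := hmono.injective
    apply this
    have ha := hpos a; have hb := hpos b
    simpa using congrArg (fun x : ℕ => (x : ℤ)) hab |>.trans (by simp [Int.toNat_of_nonneg hb.le]) |>.symm.trans (by simp [Int.toNat_of_nonneg ha.le]) |>.symm
  have himg : ((fun n : ℕ => (f.eval (n : ℤ)).toNat) '' {n : ℕ | Prime (f.eval (n : ℤ))}).Infinite :=
    hS.image (hinj.injOn)
  apply himg.mono
  rintro p ⟨n, hn, rfl⟩
  exact hT n hn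



/-- Bunyakovsky's conjecture for quadratic polynomials: every degree-2 integer polynomial with
positive leading coefficient, irreducible over `ℤ`, such that no prime divides all of its
values, takes prime values at infinitely many natural numbers. -/
def BunyakovskyQuadratic : Prop :=
  ∀ f : Polynomial ℤ, f.degree = 2 → 0 < f.leadingCoeff → Irreducible f →
    (∀ m : ℕ, m.Prime → ¬ ∀ x : ℤ, (m : ℤ) ∣ f.eval x) →
    {n : ℕ | Prime (f.eval (n : ℤ))}.Infinite

/-- Theorem 5.1: Bunyakovsky's conjecture for quadratic polynomials implies that for every
squarefree positive `d ≡ 3 (mod 8)` there are infinitely many anomalous primes over `d`: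
for `d = 3` these are the primes of the form `12b² − 6b + 1`, and for `d ≠ 3` the primes `p`
with `4p = 1 + d·b²` for some integer `b`. -/
theorem stmt_19 (hB : BunyakovskyQuadratic) (d : ℕ) (hd : Squarefree d) (hdpos : 0 < d)
    (hd8 : d % 8 = 3) :
    (d = 3 → {p : ℕ | p.Prime ∧ ∃ b : ℤ, (p : ℤ) = 12 * b ^ 2 - 6 * b + 1}.Infinite) ∧
    (d ≠ 3 → {p : ℕ | p.Prime ∧ ∃ b : ℤ, (4 * p : ℤ) = 1 + d * b ^ 2}.Infinite) := by
  constructor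
  · -- d = 3 case
    intro _
    set f : ℤ[X] := C 12 * X ^ 2 + C (-6) * X + C 1 with hf
    have heval : ∀ x : ℤ, f.eval x = 12 * x ^ 2 - 6 * x + 1 := by
      intro x; simp [hf]; ring
    have hdeg : f.degree = 2 := degree_quadratic (by norm_num)
    have hlead : 0 < f.leadingCoeff := by
      rw [hf, leadingCoeff_quadratic (by norm_num : (12:ℤ) ≠ 0)]; norm_num
    have hprim : f.IsPrimitive := by
      intro r hr
      have h0 : r ∣ f.coeff 0 := (C_dvd_iff_dvd_coeff r f).mp hr 0
      have hco : f.coeff 0 = 1 := by simp [hf]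
      rw [hco] at h0
      exact isUnit_of_dvd_one h0
    have hirr : Irreducible f := quad_irred 12 (-6) 1 (by norm_num) (by norm_num) hprim
    have hnop : ∀ m : ℕ, m.Prime → ¬ ∀ x : ℤ, (m : ℤ) ∣ f.eval x := by
      intro m hm hall
      have h := hall 0
      rw [heval 0] at h
      norm_num at h
      have h1 : (m : ℤ) ≤ 1 := Int.le_of_dvd one_pos h
      have h2 : m ≤ 1 := by exact_mod_cast h1
      have := hm.two_le
      omega
    have hS := hB f hdeg hlead hirr hnop
    have hmono : StrictMono fun n : ℕ => f.eval (n : ℤ) := by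
      intro a b hab
      simp only [heval]
      have hlt : (a : ℤ) < b := by exact_mod_cast hab
      have ha : (0:ℤ) ≤ a := Int.natCast_nonneg a
      nlinarith
    have hpos : ∀ n : ℕ, 0 < f.eval (n : ℤ) := by
      intro n; rw [heval]
      nlinarith [sq_nonneg (24 * (n:ℤ) - 6)]
    exact infinite_primes_of_poly f hmono hpos hS _ (by
      intro n hn
      have hp := hpos n
      have hcast : ((f.eval (n : ℤ)).toNat : ℤ) = f.eval (n : ℤ) := Int.toNat_of_nonneg hp.le
      refine ⟨?_, n, ?_⟩
      · have h1 : Nat.Prime (f.eval (n : ℤ)).natAbs := Int.prime_iff_natAbs_prime.mp hn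
        have h2 : (f.eval (n : ℤ)).toNat = (f.eval (n : ℤ)).natAbs := by
          omega
        rw [h2]; exact h1
      · rw [hcast, heval])
  · -- d ≠ 3 case
    intro _
    set j : ℕ := d / 8 with hj
    have hdj : (d : ℤ) = 8 * j + 3 := by
      have := Nat.div_add_mod d 8
      push_cast [hj]
      omega
    set C0 : ℤ := 2 * j + 1 with hC0
    have h4C0 : 4 * C0 = (d : ℤ) + 1 := by rw [hC0, hdj]; ring
    have hdZ : (0:ℤ) < d := by exact_mod_cast hdpos
    set f : ℤ[X] := C (d:ℤ) * X ^ 2 + C (d:ℤ) * X + C C0 with hf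
    have heval : ∀ x : ℤ, f.eval x = d * x ^ 2 + d * x + C0 := by
      intro x; simp [hf]
    have hdeg : f.degree = 2 := degree_quadratic (by positivity)
    have hlead : 0 < f.leadingCoeff := by
      rw [hf, leadingCoeff_quadratic (by positivity : (d:ℤ) ≠ 0)]; exact hdZ
    have hprim : f.IsPrimitive := by
      intro r hr
      have h2 : r ∣ f.coeff 2 := (C_dvd_iff_dvd_coeff r f).mp hr 2
      have h0 : r ∣ f.coeff 0 := (C_dvd_iff_dvd_coeff r f).mp hr 0
      have hc2 : f.coeff 2 = (d:ℤ) := by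
        rw [hf]; simp only [coeff_add, coeff_C_mul, coeff_X_pow, coeff_X, coeff_C]
        norm_num
      have hc0 : f.coeff 0 = C0 := by
        rw [hf]; simp only [coeff_add, coeff_C_mul, coeff_X_pow, coeff_X, coeff_C]
        norm_num
      rw [hc2] at h2; rw [hc0] at h0
      have hra : r ∣ 4 * C0 - (d:ℤ) := dvd_sub (h0.mul_left 4) h2
      rw [h4C0] at hra
      have h1 : r ∣ 1 := by simpa using hra
      exact isUnit_of_dvd_one h1
    have hirr : Irreducible f :=
      quad_irred (d:ℤ) (d:ℤ) C0 (by positivity) (by nlinarith) hprim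
    have hnop : ∀ m : ℕ, m.Prime → ¬ ∀ x : ℤ, (m : ℤ) ∣ f.eval x := by
      intro m hm hall
      have h0 := hall 0
      have h1 := hall 1
      rw [heval 0] at h0
      rw [heval 1] at h1
      have h0' : (m : ℤ) ∣ C0 := by simpa using h0
      have h2d : (m : ℤ) ∣ 2 * d := by
        have hs : (m:ℤ) ∣ ((d:ℤ) * 1 ^ 2 + d * 1 + C0) - C0 := dvd_sub h1 h0'
        have hh : ((d:ℤ) * 1 ^ 2 + d * 1 + C0) - C0 = 2 * d := by ring
        rwa [hh] at hs
      have hmp : Prime (m : ℤ) := Nat.prime_iff_prime_int.mp hm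
      rcases hmp.dvd_mul.mp h2d with hm2 | hmd
      · have hle : (m:ℤ) ≤ 2 := Int.le_of_dvd (by norm_num) hm2
        have hle' : m ≤ 2 := by exact_mod_cast hle
        have hge := hm.two_le
        have hm2' : m = 2 := by omega
        rw [hm2'] at h0'
        have hodd : (2:ℤ) ∣ 2 * (j:ℤ) + 1 := by
          rw [← hC0]; exact_mod_cast h0'
        omega
      · have h4 : (m:ℤ) ∣ 4 * C0 := h0'.mul_left 4
        rw [h4C0] at h4
        have hone : (m:ℤ) ∣ 1 := by
          have hs := dvd_sub h4 hmd
          simpa using hs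
        have hle : (m:ℤ) ≤ 1 := Int.le_of_dvd one_pos hone
        have hle' : m ≤ 1 := by exact_mod_cast hle
        have := hm.two_le
        omega
    have hS := hB f hdeg hlead hirr hnop
    have hC0pos : (0:ℤ) < C0 := by rw [hC0]; positivity
    have hmono : StrictMono fun n : ℕ => f.eval (n : ℤ) := by
      intro a b hab
      simp only [heval]
      have hlt : (a : ℤ) < b := by exact_mod_cast hab
      have ha : (0:ℤ) ≤ a := Int.natCast_nonneg a
      have h1 : (a:ℤ) ^ 2 < (b:ℤ) ^ 2 := by nlinarith
      have h2 := mul_lt_mul_of_pos_left h1 hdZ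
      have h3 := mul_lt_mul_of_pos_left hlt hdZ
      linarith
    have hpos : ∀ n : ℕ, 0 < f.eval (n : ℤ) := by
      intro n; rw [heval]
      have ha : (0:ℤ) ≤ n := Int.natCast_nonneg n
      have h1 : (0:ℤ) ≤ (d:ℤ) * (n:ℤ) ^ 2 := mul_nonneg hdZ.le (sq_nonneg _)
      have h2 : (0:ℤ) ≤ (d:ℤ) * (n:ℤ) := mul_nonneg hdZ.le ha
      linarith
    exact infinite_primes_of_poly f hmono hpos hS _ (by
      intro n hn
      have hp := hpos n
      have hcast : ((f.eval (n : ℤ)).toNat : ℤ) = f.eval (n : ℤ) := Int.toNat_of_nonneg hp.le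
      refine ⟨?_, 2 * n + 1, ?_⟩
      · have h1 : Nat.Prime (f.eval (n : ℤ)).natAbs := Int.prime_iff_natAbs_prime.mp hn
        have h2 : (f.eval (n : ℤ)).toNat = (f.eval (n : ℤ)).natAbs := by omega
        rw [h2]; exact h1
      · rw [hcast, heval]
        push_cast
        linear_combination h4C0)
end
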